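/- arXiv:2511.02414 — 9 statements merged into one kernel-verified Lean document; each statement's English description precedes it below -/
import Mathlib

section
/- Let P and Q be probability measures on a measurable space, and let A and A' be two measurable sets that are both co-supports of the pair (P,Q). Then Q(A) = Q(A'). -/
open MeasureTheory

/-- A measurable set `A` is a *co-support* of the pair `(P, Q)` if `(P ⊓ Q)(Aᶜ) = 0`
(where `P ⊓ Q` is the lattice infimum of the two measures) and for every measurable
subset `B ⊆ A`, `P(B) = 0 ↔ Q(B) = 0`. -/
def IsCosupport {α : Type*} [MeasurableSpace α] (P Q : Measure α) (A : Set α) : Prop :=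
  MeasurableSet A ∧ (P ⊓ Q) Aᶜ = 0 ∧
    ∀ B : Set α, B ⊆ A → MeasurableSet B → (P B = 0 ↔ Q B = 0)


lemma inf_zero_singular {α : Type*} [MeasurableSpace α] (μ ν : Measure α)
    [IsFiniteMeasure μ] [IsFiniteMeasure ν] (h : μ ⊓ ν = 0) : μ ⟂ₘ ν := by
  have hdec := μ.haveLebesgueDecomposition_of_sigmaFinite ν
  set f := μ.rnDeriv ν
  have hle : ν.withDensity (fun x => min (f x) 1) ≤ μ ⊓ ν := by
    refine le_inf ?_ ?_
    · calc ν.withDensity (fun x => min (f x) 1) ≤ ν.withDensity f :=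
          withDensity_mono (Filter.Eventually.of_forall fun x => min_le_left _ _)
        _ ≤ μ := Measure.withDensity_rnDeriv_le μ ν
    · calc ν.withDensity (fun x => min (f x) 1) ≤ ν.withDensity (fun _ => 1) :=
          withDensity_mono (Filter.Eventually.of_forall fun x => min_le_right _ _)
        _ = ν := by simp
  rw [h] at hle
  have h0 : ν.withDensity (fun x => min (f x) 1) = 0 := le_antisymm hle bot_le
  have hmeas : Measurable fun x => min (f x) 1 := (μ.measurable_rnDeriv ν).min measurable_const
  have hf0 : f =ᵐ[ν] 0 := by
    have := (withDensity_eq_zero_iff hmeas.aemeasurable).mp h0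
    filter_upwards [this] with x hx
    rcases _root_.min_eq_iff.mp hx with ⟨h', _⟩ | ⟨h', _⟩
    · exact h'
    · exact absurd h' one_ne_zero
  have : ν.withDensity f = 0 := by
    rw [withDensity_congr_ae hf0]; simp
  have hμ : μ = μ.singularPart ν := by
    conv_lhs => rw [← μ.singularPart_add_rnDeriv ν]
    rw [this, add_zero]
  rw [hμ]
  exact Measure.mutuallySingular_singularPart μ ν

lemma cosupport_diff_null {α : Type*} [MeasurableSpace α] (P Q : Measure α)
    [IsFiniteMeasure P] [IsFiniteMeasure Q]
    {A S : Set α} (hA : IsCosupport P Q A) (hS : MeasurableSet S) (hSA : S ⊆ A)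
    (hinf : (P ⊓ Q) S = 0) : Q S = 0 := by
  set μ := P.restrict S
  set ν := Q.restrict S
  have hle : μ ⊓ ν ≤ P ⊓ Q :=
    le_inf (inf_le_left.trans (Measure.restrict_le_self))
      (inf_le_right.trans (Measure.restrict_le_self))
  have h0 : μ ⊓ ν = 0 := by
    rw [← Measure.measure_univ_eq_zero]
    have h1 : (μ ⊓ ν) Set.univ ≤ (μ ⊓ ν) S + (μ ⊓ ν) Sᶜ := by
      rw [← Set.union_compl_self S]; exact measure_union_le _ _
    have h2 : (μ ⊓ ν) S ≤ 0 := hinf ▸ hle S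
    have h3 : (μ ⊓ ν) Sᶜ ≤ 0 := by
      calc (μ ⊓ ν) Sᶜ ≤ μ Sᶜ := inf_le_left (a := μ) (b := ν) Sᶜ
        _ = P (Sᶜ ∩ S) := Measure.restrict_apply hS.compl
        _ = 0 := by simp
    simpa using h1.trans (add_le_add h2 h3)
  obtain ⟨T, hT, hμT, hνTc⟩ := inf_zero_singular μ ν h0
  have hPTS : P (T ∩ S) = 0 := by rwa [← Measure.restrict_apply hT]
  have hQTS : Q (T ∩ S) = 0 :=
    (hA.2.2 (T ∩ S) ((Set.inter_subset_right).trans hSA) (hT.inter hS)).mp hPTS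
  have hQTcS : Q (Tᶜ ∩ S) = 0 := by rwa [← Measure.restrict_apply hT.compl]
  have : Q S ≤ Q (T ∩ S) + Q (Tᶜ ∩ S) := by
    rw [← Set.inter_union_compl S T]
    simpa [Set.inter_comm] using measure_union_le (S ∩ T) (S ∩ Tᶜ)
  simpa [hQTS, hQTcS] using this

/-- Any two co-supports of a pair `(P, Q)` of probability measures have
the same `Q`-mass. -/
theorem cosupport_Q_mass_eq
    {α : Type*} [MeasurableSpace α] (P Q : Measure α)
    [IsProbabilityMeasure P] [IsProbabilityMeasure Q]
    (A A' : Set α) (hA : IsCosupport P Q A) (hA' : IsCosupport P Q A') :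
    Q A = Q A' := by
  have hd1 : Q (A \ A') = 0 := by
    refine cosupport_diff_null P Q hA (hA.1.diff hA'.1) Set.diff_subset ?_
    exact le_antisymm (le_trans (measure_mono fun x hx => hx.2) hA'.2.1.le) bot_le
  have hd2 : Q (A' \ A) = 0 := by
    refine cosupport_diff_null P Q hA' (hA'.1.diff hA.1) Set.diff_subset ?_
    exact le_antisymm (le_trans (measure_mono fun x hx => hx.2) hA.2.1.le) bot_le
  have e1 : Q (A ∩ A') + Q (A \ A') = Q A := measure_inter_add_diff A hA'.1
  have e2 : Q (A' ∩ A) + Q (A' \ A) = Q A' := measure_inter_add_diff A' hA.1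
  rw [← e1, ← e2, hd1, hd2, Set.inter_comm]
end

section
/- Let P and Q be probability measures on a measurable space. Then (i) there exists a measurable set C that is a co-support of (P,Q); (ii) the infimum of Q(A) over all measurable sets A with P(Aᶜ) = 0 is attained; and (iii) for every co-support C of (P,Q), Q(C) equals this infimum, i.e. Q(C) = inf{ Q(A) : A measurable, P(Aᶜ) = 0 }. -/
open MeasureTheory

/-!
A co-support `C` is found from the Lebesgue decompositions of `Q` w.r.t. `P` and of `P`
w.r.t. `Q`: intersect a support of `P` carrying no mass of the singular part of `Q` with the
symmetric set. For any co-support `C` and any support `A` of `P`, the set `C \ A` is `P`-null,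
hence `Q`-null, so `Q C ≤ Q A`. Conversely, `(P ⊓ Q)(Cᶜ) = 0` means that the restrictions of
`P` and `Q` to `Cᶜ` are mutually singular, so `Cᶜ` splits into a `P`-null part and a `Q`-null
part; removing the `P`-null part gives a support `A` of `P` with `Q A ≤ Q C`.
-/

namespace MeasureTheory.Measure

variable {α : Type*} [MeasurableSpace α] {μ ν : Measure α} {s : Set α}

lemma mutuallySingular_restrict_of_inf_null (hs : MeasurableSet s) (h : (μ ⊓ ν) s = 0) :
    μ.restrict s ⟂ₘ ν.restrict s := by
  refine mutuallySingular_of_disjoint fun ξ hξμ hξν ↦ le_bot_iff.2 (?_ : ξ = 0)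
  have hξ_inf : ξ ≤ μ ⊓ ν := le_inf (hξμ.trans restrict_le_self) (hξν.trans restrict_le_self)
  have hξ_s : ξ s = 0 := le_antisymm ((hξ_inf s).trans h.le) bot_le
  have hξ_compl : ξ sᶜ = 0 := by
    refine le_antisymm ((hξμ sᶜ).trans ?_) bot_le
    rw [restrict_apply hs.compl, Set.compl_inter_self, measure_empty]
  rw [← measure_univ_eq_zero, ← Set.union_compl_self s]
  exact measure_union_null hξ_s hξ_compl

lemma exists_compl_null_measure_le_of_inf_compl_null (hs : MeasurableSet s)
    (h : (μ ⊓ ν) sᶜ = 0) : ∃ A, MeasurableSet A ∧ μ Aᶜ = 0 ∧ ν A ≤ ν s := by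
  have hsing := mutuallySingular_restrict_of_inf_null hs.compl h
  set t := hsing.nullSet
  have ht : MeasurableSet t := hsing.measurableSet_nullSet
  have hμ : μ (t ∩ sᶜ) = 0 := by
    rw [← restrict_apply ht]; exact hsing.measure_nullSet
  have hν : ν (tᶜ ∩ sᶜ) = 0 := by
    rw [← restrict_apply ht.compl]; exact hsing.measure_compl_nullSet
  refine ⟨(t ∩ sᶜ)ᶜ, (ht.inter hs.compl).compl, by rwa [compl_compl], ?_⟩
  calc ν (t ∩ sᶜ)ᶜ ≤ ν (s ∪ tᶜ ∩ sᶜ) := measure_mono fun x hx ↦ by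
        by_cases hxs : x ∈ s
        · exact Or.inl hxs
        · exact Or.inr ⟨fun hxt ↦ hx ⟨hxt, hxs⟩, hxs⟩
    _ ≤ ν s := (measure_union_le _ _).trans (by rw [hν, add_zero])

lemma exists_compl_null_restrict_absolutelyContinuous (μ ν : Measure α)
    [μ.HaveLebesgueDecomposition ν] : ∃ s, MeasurableSet s ∧ ν sᶜ = 0 ∧ μ.restrict s ≪ ν := by
  obtain ⟨s, hs, hμs, hνs⟩ := mutuallySingular_singularPart μ ν
  refine ⟨s, hs, hνs, ?_⟩
  rw [← singularPart_add_rnDeriv μ ν, restrict_add, restrict_eq_zero.2 hμs, zero_add]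
  exact restrict_le_self.absolutelyContinuous.trans (withDensity_absolutelyContinuous _ _)

end MeasureTheory.Measure

section

open Measure

variable {α : Type*} [MeasurableSpace α] {P Q : Measure α}

lemma exists_isCosupport (P Q : Measure α) [P.HaveLebesgueDecomposition Q]
    [Q.HaveLebesgueDecomposition P] : ∃ C, IsCosupport P Q C := by
  obtain ⟨s, hs, hPs, hQs⟩ := exists_compl_null_restrict_absolutelyContinuous Q P
  obtain ⟨t, ht, hQt, hPt⟩ := exists_compl_null_restrict_absolutelyContinuous P Q
  refine ⟨s ∩ t, hs.inter ht, ?_, fun B hB _ ↦ ⟨fun hPB ↦ ?_, fun hQB ↦ ?_⟩⟩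
  · rw [Set.compl_inter]
    exact measure_union_null (absolutelyContinuous_of_le inf_le_left hPs)
      (absolutelyContinuous_of_le inf_le_right hQt)
  · rw [← restrict_eq_self Q (hB.trans Set.inter_subset_left)]; exact hQs hPB
  · rw [← restrict_eq_self P (hB.trans Set.inter_subset_right)]; exact hPt hQB

namespace IsCosupport

lemma measure_le_of_compl_null {C A : Set α} (hC : IsCosupport P Q C) (hA : MeasurableSet A)
    (hPA : P Aᶜ = 0) : Q C ≤ Q A := by
  have hP : P (C \ A) = 0 := measure_mono_null (fun _ hx ↦ hx.2) hPA
  exact measure_mono_ae (ae_le_set.2 <| (hC.2.2 _ Set.sdiff_subset (hC.1.diff hA)).1 hP)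

lemma exists_compl_null_measure_le {C : Set α} (hC : IsCosupport P Q C) :
    ∃ A, MeasurableSet A ∧ P Aᶜ = 0 ∧ Q A ≤ Q C :=
  exists_compl_null_measure_le_of_inf_compl_null hC.1 hC.2.1

lemma measure_eq_iInf {C : Set α} (hC : IsCosupport P Q C) :
    Q C = ⨅ (A : Set α) (_ : MeasurableSet A) (_ : P Aᶜ = 0), Q A := by
  obtain ⟨A, hA, hPA, hQA⟩ := hC.exists_compl_null_measure_le
  exact le_antisymm (le_iInf₂ fun _ hA' ↦ le_iInf (hC.measure_le_of_compl_null hA'))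
    ((iInf₂_le_of_le A hA (iInf_le _ hPA)).trans hQA)

end IsCosupport

end

/-- For probability measures `P` and `Q`:
(i) a co-support of `(P,Q)` exists;
(ii) the infimum of `Q(A)` over measurable supports `A` of `P` (sets with `P(Aᶜ) = 0`)
is attained; and
(iii) every co-support `C` of `(P,Q)` satisfies
`Q(C) = inf { Q(A) : A measurable, P(Aᶜ) = 0 }` (the extreme precision `α_∞(P,Q)`). -/
theorem cosupport_exists_and_realizes_extreme_precision
    {α : Type*} [MeasurableSpace α] (P Q : Measure α)
    [IsProbabilityMeasure P] [IsProbabilityMeasure Q] :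
    (∃ C : Set α, IsCosupport P Q C) ∧
    (∃ A : Set α, MeasurableSet A ∧ P Aᶜ = 0 ∧
        Q A = ⨅ (A' : Set α) (_ : MeasurableSet A') (_ : P A'ᶜ = 0), Q A') ∧
    (∀ C : Set α, IsCosupport P Q C →
        Q C = ⨅ (A : Set α) (_ : MeasurableSet A) (_ : P Aᶜ = 0), Q A) := by
  obtain ⟨C, hC⟩ := exists_isCosupport P Q
  obtain ⟨A, hA, hPA, hQA⟩ := hC.exists_compl_null_measure_le
  refine ⟨⟨C, hC⟩, ⟨A, hA, hPA, le_antisymm (hQA.trans hC.measure_eq_iInf.le) ?_⟩,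
    fun _ ↦ IsCosupport.measure_eq_iInf⟩
  exact iInf₂_le_of_le A hA (iInf_le _ hPA)
end

section
/- There exists a universal constant η > 0, independent of the dimension, such that for every d ≥ 1, if X is uniformly distributed on the closed unit Euclidean ball of ℝ^d, then X is √(η/d)-subgaussian; that is, for all θ ∈ ℝ^d, E[exp⟨θ, X⟩] ≤ exp((η/d)·‖θ‖²/2) (note that E X = 0). -/
/-!
Write `Y = ⟪θ, X⟫` and `a = ‖θ‖² / d`. Since the ball is symmetric, `E e^Y = E cosh |Y|`.
The cap `{x ∈ B | ⟪θ, x⟫ > s}` lies in a ball of radius `√(1 - s² / ‖θ‖²)`, so its relative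
volume is at most `exp (-s² / (2a))`. Integrating this tail bound against `sinh` (layer cake),
with `sinh s ≤ s eˢ` and a completed square, leaves Gaussian integrals and gives
`E cosh |Y| ≤ 1 + 2 e^{a/2} (a + a √(2πa)) ≤ e^{5a}`, that is, `η = 10`.
-/

open MeasureTheory ProbabilityTheory Real Set Metric Module
open scoped ENNReal RealInnerProductSpace

lemma sinh_le_mul_exp (s : ℝ) : sinh s ≤ s * exp s := by
  have h := mul_le_mul_of_nonneg_left (add_one_le_exp (-(2 * s))) (exp_pos s).le
  have hexp : exp s * exp (-(2 * s)) = exp (-s) := by rw [← exp_add]; ring_nf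
  rw [sinh_eq]
  linarith

lemma one_add_mul_exp_half_le_exp {x : ℝ} (hx : 0 ≤ x) : 1 + x * exp (x / 2) ≤ exp x := by
  have h := self_le_sinh_iff.2 (by positivity : 0 ≤ x / 2)
  have hexp : exp x = exp (x / 2) * exp (x / 2) := by rw [← exp_add]; ring_nf
  have hinv : exp (x / 2) * exp (-(x / 2)) = 1 := by rw [← exp_add, add_neg_cancel, exp_zero]
  rw [sinh_eq] at h
  nlinarith [exp_pos (x / 2)]

lemma sqrt_one_sub_le_exp_neg_half (b : ℝ) : √(1 - b) ≤ exp (-(b / 2)) := by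
  have h : exp (-(b / 2)) ^ 2 = exp (-b) := by rw [← exp_nat_mul]; ring_nf
  rw [← sqrt_sq (exp_nonneg _), h]
  exact sqrt_le_sqrt (by linarith [add_one_le_exp (-b)])

lemma one_add_two_mul_exp_half_mul_le_exp {a : ℝ} (ha : 0 ≤ a) :
    1 + 2 * exp (a / 2) * (a + a * √(2 * π * a)) ≤ exp (5 * a) := by
  have hsqrt : √(2 * π * a) ≤ 3 / 2 * (1 + a) := by
    rw [sqrt_le_left (by positivity)]
    nlinarith [mul_le_mul_of_nonneg_right pi_lt_four.le ha, sq_nonneg (1 - a)]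
  have hexp : exp (a / 2) * (1 + a) ≤ exp (5 * a / 2) := by
    calc exp (a / 2) * (1 + a) ≤ exp (a / 2) * exp (2 * a) := by
          gcongr; linarith [add_one_le_exp a, exp_le_exp.2 (by linarith : a ≤ 2 * a)]
      _ = exp (5 * a / 2) := by rw [← exp_add]; ring_nf
  calc 1 + 2 * exp (a / 2) * (a + a * √(2 * π * a))
      ≤ 1 + 2 * exp (a / 2) * (5 / 2 * a * (1 + a)) := by
        gcongr; nlinarith [mul_le_mul_of_nonneg_left hsqrt ha]
    _ = 1 + 5 * a * (exp (a / 2) * (1 + a)) := by ring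
    _ ≤ 1 + 5 * a * exp (5 * a / 2) := by gcongr
    _ ≤ exp (5 * a) := one_add_mul_exp_half_le_exp (by positivity)

lemma integral_exp_neg_sub_sq_div (c : ℝ) {a : ℝ} (ha : 0 < a) :
    ∫ s, exp (-((s - c) ^ 2 / (2 * a))) = √(2 * π * a) := by
  have h := integral_sub_right_eq_self (fun s : ℝ => exp (-(1 / (2 * a)) * s ^ 2)) c (μ := volume)
  simp only [integral_gaussian] at h
  rw [show π / (1 / (2 * a)) = 2 * π * a by field_simp] at h
  rw [← h]
  congr 1 with s
  congr 1
  ring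

lemma integrable_exp_neg_sub_sq_div (c : ℝ) {a : ℝ} (ha : 0 < a) :
    Integrable (fun s : ℝ => exp (-((s - c) ^ 2 / (2 * a)))) := by
  refine ((integrable_exp_neg_mul_sq (by positivity : 0 < 1 / (2 * a))).comp_sub_right c).congr
    (.of_forall fun s => ?_)
  simp only
  congr 1
  ring

lemma integral_Ioc_sub_mul_exp_neg_sub_sq_div_le {a t : ℝ} (ha : 0 < a) (ht : 0 ≤ t) :
    ∫ s in Ioc 0 t, (s - a) * exp (-((s - a) ^ 2 / (2 * a))) ≤ a := by
  have hderiv : ∀ s ∈ uIcc 0 t, HasDerivAt (fun s => -a * exp (-((s - a) ^ 2 / (2 * a))))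
      ((s - a) * exp (-((s - a) ^ 2 / (2 * a)))) s := by
    intro s _
    have hsq : HasDerivAt (fun s => -((s - a) ^ 2 / (2 * a))) (-(2 * (s - a) / (2 * a))) s := by
      simpa using ((((hasDerivAt_id s).sub_const a).fun_pow 2).div_const (2 * a)).fun_neg
    refine (hsq.exp.const_mul (-a)).congr_deriv ?_
    field_simp
  have hcont : Continuous fun s => (s - a) * exp (-((s - a) ^ 2 / (2 * a))) := by fun_prop
  rw [← intervalIntegral.integral_of_le ht,
    intervalIntegral.integral_eq_sub_of_hasDerivAt hderiv (hcont.intervalIntegrable _ _)]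
  have h0 : exp (-((0 - a) ^ 2 / (2 * a))) ≤ 1 := exp_le_one_iff.2 (by simp; positivity)
  nlinarith [exp_pos (-((t - a) ^ 2 / (2 * a)))]

lemma integral_Ioc_exp_neg_sq_div_mul_sinh_le {a t : ℝ} (ha : 0 < a) (ht : 0 ≤ t) :
    ∫ s in Ioc 0 t, exp (-(s ^ 2 / (2 * a))) * sinh s
      ≤ exp (a / 2) * (a + a * √(2 * π * a)) := by
  set φ : ℝ → ℝ := fun s => exp (-((s - a) ^ 2 / (2 * a)))
  -- completing the square: `-s²/(2a) + s = a/2 - (s - a)²/(2a)`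
  have hpoint : ∀ s, exp (-(s ^ 2 / (2 * a))) * sinh s
      ≤ exp (a / 2) * ((s - a) * φ s + a * φ s) := by
    intro s
    calc exp (-(s ^ 2 / (2 * a))) * sinh s ≤ exp (-(s ^ 2 / (2 * a))) * (s * exp s) := by
          gcongr; exact sinh_le_mul_exp s
      _ = s * exp (a / 2 + -((s - a) ^ 2 / (2 * a))) := by
          rw [show a / 2 + -((s - a) ^ 2 / (2 * a)) = -(s ^ 2 / (2 * a)) + s by field_simp; ring,
            exp_add]
          ring
      _ = exp (a / 2) * ((s - a) * φ s + a * φ s) := by rw [exp_add]; ring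
  have hφ : ∫ s in Ioc 0 t, φ s ≤ √(2 * π * a) :=
    (setIntegral_le_integral (integrable_exp_neg_sub_sq_div a ha)
      (.of_forall fun _ => by positivity)).trans_eq (integral_exp_neg_sub_sq_div a ha)
  have hint : IntegrableOn (fun s => (s - a) * φ s) (Ioc 0 t) :=
    (by fun_prop : Continuous fun s => (s - a) * φ s).integrableOn_Ioc
  calc ∫ s in Ioc 0 t, exp (-(s ^ 2 / (2 * a))) * sinh s
      ≤ ∫ s in Ioc 0 t, exp (a / 2) * ((s - a) * φ s + a * φ s) :=
        setIntegral_mono_on (by fun_prop : Continuous _).integrableOn_Ioc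
          (by fun_prop : Continuous _).integrableOn_Ioc measurableSet_Ioc fun s _ => hpoint s
    _ = exp (a / 2) * ((∫ s in Ioc 0 t, (s - a) * φ s) + a * ∫ s in Ioc 0 t, φ s) := by
        rw [integral_const_mul, integral_add hint
          ((by fun_prop : Continuous φ).integrableOn_Ioc.const_mul a), integral_const_mul]
    _ ≤ exp (a / 2) * (a + a * √(2 * π * a)) := by
        gcongr
        exact integral_Ioc_sub_mul_exp_neg_sub_sq_div_le ha ht

section Tail

variable {Ω : Type*} [MeasurableSpace Ω] {P : Measure Ω} {Y : Ω → ℝ}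

lemma integral_cosh_sub_one_eq_lintegral_meas_lt_mul_sinh (hY : AEMeasurable Y P)
    (hY0 : 0 ≤ᵐ[P] Y) :
    ∫ ω, (cosh (Y ω) - 1) ∂P
      = (∫⁻ s in Ioi 0, P {ω | s < Y ω} * ENNReal.ofReal (sinh s)).toReal := by
  have hftc : ∀ y, ∫ s in (0 : ℝ)..y, sinh s = cosh y - 1 := fun y => by
    rw [intervalIntegral.integral_eq_sub_of_hasDerivAt (fun s _ => hasDerivAt_cosh s)
      (continuous_sinh.intervalIntegrable _ _), cosh_zero]
  rw [integral_eq_lintegral_of_nonneg_ae (.of_forall fun ω => sub_nonneg.2 (one_le_cosh _))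
      ((continuous_cosh.measurable.comp_aemeasurable hY).sub_const 1).aestronglyMeasurable,
    ← lintegral_comp_eq_lintegral_meas_lt_mul P hY0 hY
      (fun _ _ => continuous_sinh.intervalIntegrable _ _)
      (ae_restrict_of_forall_mem measurableSet_Ioi fun s hs => sinh_nonneg_iff.2 (le_of_lt hs))]
  simp only [hftc]

lemma integral_cosh_le_exp_of_meas_lt_le [IsProbabilityMeasure P] {a t : ℝ} (ha : 0 < a)
    (ht : 0 ≤ t) (hY : AEMeasurable Y P) (hY0 : 0 ≤ᵐ[P] Y) (hYt : ∀ᵐ ω ∂P, Y ω ≤ t)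
    (htail : ∀ s ∈ Ioc 0 t, P {ω | s < Y ω} ≤ ENNReal.ofReal (2 * exp (-(s ^ 2 / (2 * a))))) :
    ∫ ω, cosh (Y ω) ∂P ≤ exp (5 * a) := by
  set F : ℝ → ℝ := fun s => 2 * (exp (-(s ^ 2 / (2 * a))) * sinh s)
  have hF0 : ∀ s ∈ Ioc 0 t, 0 ≤ F s := fun s hs => by positivity [sinh_nonneg_iff.2 hs.1.le]
  have hlayer : ∫⁻ s in Ioi 0, P {ω | s < Y ω} * ENNReal.ofReal (sinh s)
      ≤ ENNReal.ofReal (∫ s in Ioc 0 t, F s) := by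
    have hvanish : ∀ s ∈ Ioi t, P {ω | s < Y ω} * ENNReal.ofReal (sinh s) = 0 := fun s hs => by
      rw [measure_mono_null (s := {ω | s < Y ω}) (fun ω hω => (lt_trans hs hω).not_ge)
        (ae_iff.1 hYt), zero_mul]
    rw [← Ioc_union_Ioi_eq_Ioi ht, lintegral_union measurableSet_Ioi (Ioc_disjoint_Ioi le_rfl),
      setLIntegral_congr_fun measurableSet_Ioi hvanish, lintegral_zero, add_zero,
      ofReal_integral_eq_lintegral_ofReal (by fun_prop : Continuous F).integrableOn_Ioc
        (ae_restrict_of_forall_mem measurableSet_Ioc hF0)]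
    refine setLIntegral_mono' measurableSet_Ioc fun s hs => ?_
    simp only [F, ← mul_assoc]
    rw [ENNReal.ofReal_mul (by positivity)]
    exact mul_le_mul_left (htail s hs) _
  have hcosh : Integrable (fun ω => cosh (Y ω)) P :=
    .of_bound (continuous_cosh.measurable.comp_aemeasurable hY).aestronglyMeasurable (cosh t) <| by
      filter_upwards [hY0, hYt] with ω hω0 hωt
      rwa [norm_of_nonneg (cosh_pos _).le, cosh_le_cosh, abs_of_nonneg hω0, abs_of_nonneg ht]
  have hsub : ∫ ω, (cosh (Y ω) - 1) ∂P ≤ ∫ s in Ioc 0 t, F s := by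
    rw [integral_cosh_sub_one_eq_lintegral_meas_lt_mul_sinh hY hY0]
    exact ENNReal.toReal_le_of_le_ofReal (setIntegral_nonneg measurableSet_Ioc hF0) hlayer
  have hF : ∫ s in Ioc 0 t, F s ≤ 2 * exp (a / 2) * (a + a * √(2 * π * a)) := by
    rw [integral_const_mul]
    linarith [integral_Ioc_exp_neg_sq_div_mul_sinh_le ha ht]
  rw [integral_sub hcosh (integrable_const 1), integral_const, probReal_univ, one_smul] at hsub
  linarith [one_add_two_mul_exp_half_mul_le_exp ha.le]

end Tail

lemma integral_exp_eq_integral_cosh_of_isNegInvariant {G : Type*} [MeasurableSpace G] [AddGroup G]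
    [MeasurableNeg G] (ν : Measure G) [ν.IsNegInvariant] {f : G → ℝ} (hf : ∀ x, f (-x) = -f x)
    (hexp : Integrable (fun x => exp (f x)) ν) :
    ∫ x, exp (f x) ∂ν = ∫ x, cosh (f x) ∂ν := by
  have hneg : ∫ x, exp (-f x) ∂ν = ∫ x, exp (f x) ∂ν := by
    simpa only [hf] using integral_neg_eq_self (fun x => exp (f x)) ν
  simp only [cosh_eq]
  rw [integral_div, integral_add hexp (by simpa only [hf] using hexp.comp_neg), hneg]
  ring

lemma isNegInvariant_cond {G : Type*} [MeasurableSpace G] [InvolutiveNeg G] [MeasurableNeg G]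
    (μ : Measure G) [μ.IsNegInvariant] {s : Set G} (hs : -s = s) : (μ[|s]).IsNegInvariant := by
  constructor
  ext t ht
  rw [Measure.neg_apply, cond_apply' ht.neg, cond_apply' ht, ← Measure.measure_neg μ (s ∩ -t),
    Set.inter_neg, neg_neg, hs]

section Ball

variable {E : Type*} [NormedAddCommGroup E] [InnerProductSpace ℝ E]

lemma closedBall_inter_lt_inner_subset {θ : E} (hθ : θ ≠ 0) {s : ℝ} (hs : 0 ≤ s) :
    closedBall 0 1 ∩ {x | s < ⟪θ, x⟫} ⊆ closedBall ((s / ‖θ‖ ^ 2) • θ) √(1 - s ^ 2 / ‖θ‖ ^ 2) := by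
  rintro x ⟨hx, hsx⟩
  rw [mem_closedBall_zero_iff] at hx
  rw [mem_closedBall, dist_eq_norm, ← sqrt_sq (norm_nonneg _)]
  refine sqrt_le_sqrt ?_
  rw [norm_sub_sq_real, norm_smul, real_inner_smul_right, norm_div, norm_pow, norm_norm,
    real_inner_comm, Real.norm_of_nonneg hs]
  have hsx' : s ^ 2 / ‖θ‖ ^ 2 ≤ s / ‖θ‖ ^ 2 * ⟪θ, x⟫ := by
    rw [sq, mul_div_right_comm]; gcongr; exact hsx.le
  have hc : (s / ‖θ‖ ^ 2 * ‖θ‖) ^ 2 = s ^ 2 / ‖θ‖ ^ 2 := by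
    have := norm_ne_zero_iff.2 hθ
    field_simp
  linarith [pow_le_one₀ (n := 2) (norm_nonneg x) hx]

variable [FiniteDimensional ℝ E] [MeasurableSpace E] [BorelSpace E] (μ : Measure E)
  [μ.IsAddHaarMeasure]

lemma cond_closedBall_lt_inner_le {θ : E} (hθ : θ ≠ 0) {s : ℝ} (hs : 0 ≤ s) :
    μ[{x | s < ⟪θ, x⟫} | closedBall 0 1]
      ≤ ENNReal.ofReal (exp (-(finrank ℝ E * s ^ 2 / (2 * ‖θ‖ ^ 2)))) := by
  set b := s ^ 2 / ‖θ‖ ^ 2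
  have hr : √(1 - b) ^ finrank ℝ E ≤ exp (-(finrank ℝ E * s ^ 2 / (2 * ‖θ‖ ^ 2))) :=
    calc √(1 - b) ^ finrank ℝ E ≤ exp (-(b / 2)) ^ finrank ℝ E :=
          pow_le_pow_left₀ (sqrt_nonneg _) (sqrt_one_sub_le_exp_neg_half b) _
      _ = exp (-(finrank ℝ E * s ^ 2 / (2 * ‖θ‖ ^ 2))) := by
          rw [← exp_nat_mul]; congr 1; simp only [b]; ring
  rw [cond_apply measurableSet_closedBall]
  calc (μ (closedBall 0 1))⁻¹ * μ (closedBall 0 1 ∩ {x | s < ⟪θ, x⟫})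
      ≤ (μ (closedBall 0 1))⁻¹ * μ (closedBall ((s / ‖θ‖ ^ 2) • θ) √(1 - b)) := by
        gcongr; exact closedBall_inter_lt_inner_subset hθ hs
    _ = ENNReal.ofReal (√(1 - b) ^ finrank ℝ E) := by
        rw [Measure.addHaar_closedBall' μ _ (sqrt_nonneg _), mul_left_comm,
          ENNReal.inv_mul_cancel (measure_closedBall_pos μ _ one_pos).ne'
            measure_closedBall_lt_top.ne, mul_one]
    _ ≤ ENNReal.ofReal (exp (-(finrank ℝ E * s ^ 2 / (2 * ‖θ‖ ^ 2)))) :=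
        ENNReal.ofReal_le_ofReal hr

lemma cond_closedBall_lt_abs_inner_le {θ : E} (hθ : θ ≠ 0) {s : ℝ} (hs : 0 ≤ s) :
    μ[{x | s < |⟪θ, x⟫|} | closedBall 0 1]
      ≤ ENNReal.ofReal (2 * exp (-(finrank ℝ E * s ^ 2 / (2 * ‖θ‖ ^ 2)))) := by
  have hunion : {x | s < |⟪θ, x⟫|} = {x | s < ⟪θ, x⟫} ∪ {x | s < ⟪-θ, x⟫} := by
    ext x; simp [lt_abs, inner_neg_left]
  have hneg := cond_closedBall_lt_inner_le μ (neg_ne_zero.2 hθ) hs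
  rw [norm_neg] at hneg
  rw [hunion, ENNReal.ofReal_mul zero_le_two, ENNReal.ofReal_ofNat, two_mul]
  exact (measure_union_le _ _).trans (add_le_add (cond_closedBall_lt_inner_le μ hθ hs) hneg)

lemma integral_exp_inner_cond_closedBall (θ : E) :
    ∫ x, exp ⟪θ, x⟫ ∂μ[|closedBall 0 1] = ∫ x, cosh |⟪θ, x⟫| ∂μ[|closedBall 0 1] := by
  have : (μ[|closedBall (0 : E) 1]).IsNegInvariant :=
    isNegInvariant_cond μ (by rw [neg_closedBall, neg_zero])
  have hexp : Integrable (fun x => exp ⟪θ, x⟫) μ[|closedBall 0 1] :=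
    ((by fun_prop : Continuous fun x => exp ⟪θ, x⟫).continuousOn.integrableOn_compact
      (isCompact_closedBall 0 1)).smul_measure
      (ENNReal.inv_ne_top.2 (measure_closedBall_pos μ _ one_pos).ne')
  simp only [cosh_abs]
  exact integral_exp_eq_integral_cosh_of_isNegInvariant _ (inner_neg_right θ) hexp

end Ball

/-- There is a universal constant `η > 0`, independent of the dimension,
such that for every `d ≥ 1`, if `X` is uniformly distributed on the closed unit Euclidean
ball of `ℝ^d` (a centered random vector), then `X` is `√(η/d)`-subgaussian:
`E[exp⟨θ, X⟩] ≤ exp((η/d)·‖θ‖²/2)` for all `θ ∈ ℝ^d`. -/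
theorem uniform_ball_subgaussian :
    ∃ η : ℝ, 0 < η ∧
      ∀ (d : ℕ), 1 ≤ d →
        ∀ θ : EuclideanSpace ℝ (Fin d),
          ∫ x, Real.exp ((inner ℝ θ x : ℝ))
              ∂(((volume (Metric.closedBall (0 : EuclideanSpace ℝ (Fin d)) 1))⁻¹)
                  • volume.restrict (Metric.closedBall (0 : EuclideanSpace ℝ (Fin d)) 1))
            ≤ Real.exp ((η / d) * ‖θ‖ ^ 2 / 2) := by
  refine ⟨10, by norm_num, fun d hd θ => ?_⟩
  change ∫ x, exp ⟪θ, x⟫ ∂volume[|closedBall 0 1] ≤ _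
  have : IsProbabilityMeasure (volume[|closedBall (0 : EuclideanSpace ℝ (Fin d)) 1]) :=
    cond_isProbabilityMeasure_of_finite (measure_closedBall_pos volume _ one_pos).ne'
      measure_closedBall_lt_top.ne
  rcases eq_or_ne θ 0 with rfl | hθ
  · simp
  have hd₀ : (d : ℝ) ≠ 0 := Nat.cast_ne_zero.2 (by omega)
  rw [integral_exp_inner_cond_closedBall,
    show 10 / (d : ℝ) * ‖θ‖ ^ 2 / 2 = 5 * (‖θ‖ ^ 2 / d) by ring]
  refine integral_cosh_le_exp_of_meas_lt_le (by positivity) (norm_nonneg θ) (by fun_prop)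
    (.of_forall fun x => abs_nonneg _) ?_ fun s hs => ?_
  · filter_upwards [ae_cond_mem measurableSet_closedBall] with x hx
    exact (abs_real_inner_le_norm θ x).trans
      (mul_le_of_le_one_right (norm_nonneg θ) (mem_closedBall_zero_iff.1 hx))
  · convert cond_closedBall_lt_abs_inner_le volume hθ hs.1.le using 5
    rw [finrank_euclideanSpace_fin]
    field_simp
end

section
/- Let X be a centered K-subgaussian random vector in ℝ^d, and let 0 < a < 1/(2K²). Then E[exp(a‖X‖²)] ≤ (1 − 2K²a)^{−d/2}. In particular, taking a = 1/(4K²) gives E[exp(‖X‖²/(4K²))] ≤ 2^{d/2}. -/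
open MeasureTheory ProbabilityTheory Real
open scoped RealInnerProductSpace

/-!
If `g` is a standard Gaussian vector independent of `X`, then
`E_g[exp ⟪√(2a) • X, g⟫] = exp (a‖X‖²)`. Exchanging the two expectations and applying the
subgaussian bound for each fixed `g` gives `E[exp (a‖X‖²)] ≤ E[exp (K²a‖g‖²)]`, and the latter
is a product of one-dimensional Gaussian integrals, each equal to `(1 - 2K²a)^(-1/2)`.
-/

section StdGaussian

variable {E : Type*} [NormedAddCommGroup E] [InnerProductSpace ℝ E] [FiniteDimensional ℝ E]
  [MeasurableSpace E] [BorelSpace E]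

lemma integral_exp_inner_stdGaussian (t : E) :
    ∫ g, exp ⟪t, g⟫ ∂(stdGaussian E) = exp (‖t‖ ^ 2 / 2) := by
  have hmap : (stdGaussian E).map (innerSL ℝ t) = gaussianReal 0 (‖t‖ ^ 2).toNNReal := by
    rw [IsGaussian.map_eq_gaussianReal, integral_strongDual_stdGaussian,
      variance_dual_stdGaussian, innerSL_apply_norm]
  have hmgf := congrFun (mgf_id_gaussianReal (μ := 0) (v := (‖t‖ ^ 2).toNNReal)) 1
  calc ∫ g, exp ⟪t, g⟫ ∂(stdGaussian E)
      = ∫ x, exp x ∂((stdGaussian E).map (innerSL ℝ t)) :=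
        (integral_map (innerSL ℝ t).continuous.aemeasurable
          continuous_exp.aestronglyMeasurable).symm
    _ = exp (‖t‖ ^ 2 / 2) := by
        rw [hmap]
        simpa [mgf] using hmgf

lemma integrable_exp_inner_stdGaussian (t : E) :
    Integrable (fun g ↦ exp ⟪t, g⟫) (stdGaussian E) :=
  .of_integral_ne_zero (by rw [integral_exp_inner_stdGaussian]; positivity)

lemma integral_exp_mul_sq_norm_le_integral_stdGaussian {Ω : Type*} [MeasurableSpace Ω]
    {μ : Measure Ω} [SFinite μ] {X : Ω → E} (hX : Measurable X) {K a : ℝ} (ha : 0 ≤ a)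
    (hsg : ∀ θ : E, ∫ ω, exp ⟪θ, X ω⟫ ∂μ ≤ exp (K ^ 2 * ‖θ‖ ^ 2 / 2))
    (hint : Integrable (fun g ↦ exp (K ^ 2 * a * ‖g‖ ^ 2)) (stdGaussian E)) :
    ∫ ω, exp (a * ‖X ω‖ ^ 2) ∂μ ≤ ∫ g, exp (K ^ 2 * a * ‖g‖ ^ 2) ∂(stdGaussian E) := by
  by_cases hXint : Integrable (fun ω ↦ exp (a * ‖X ω‖ ^ 2)) μ
  swap
  · rw [integral_undef hXint]
    exact integral_nonneg fun _ ↦ (exp_pos _).le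
  set c := √(2 * a)
  have hc : c ^ 2 = 2 * a := sq_sqrt (by positivity)
  have hlin : ∀ x : E, ∫ g, exp ⟪c • x, g⟫ ∂(stdGaussian E) = exp (a * ‖x‖ ^ 2) := by
    intro x
    rw [integral_exp_inner_stdGaussian, norm_smul, mul_pow, norm_eq_abs, sq_abs, hc]
    congr 1
    ring
  have hjoint : Integrable (Function.uncurry fun ω g ↦ exp ⟪c • X ω, g⟫)
      (μ.prod (stdGaussian E)) := by
    refine (integrable_prod_iff (by fun_prop)).2
      ⟨ae_of_all _ fun ω ↦ integrable_exp_inner_stdGaussian (c • X ω), ?_⟩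
    simpa only [Function.uncurry_apply_pair, norm_of_nonneg (exp_pos _).le, hlin] using hXint
  calc ∫ ω, exp (a * ‖X ω‖ ^ 2) ∂μ
      = ∫ ω, ∫ g, exp ⟪c • X ω, g⟫ ∂(stdGaussian E) ∂μ := by simp_rw [hlin]
    _ = ∫ g, ∫ ω, exp ⟪c • X ω, g⟫ ∂μ ∂(stdGaussian E) := integral_integral_swap hjoint
    _ ≤ ∫ g, exp (K ^ 2 * a * ‖g‖ ^ 2) ∂(stdGaussian E) := by
        refine integral_mono hjoint.integral_prod_right hint fun g ↦ ?_
        calc ∫ ω, exp ⟪c • X ω, g⟫ ∂μ = ∫ ω, exp ⟪c • g, X ω⟫ ∂μ := by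
              simp_rw [real_inner_smul_left, real_inner_comm]
          _ ≤ exp (K ^ 2 * ‖c • g‖ ^ 2 / 2) := hsg _
          _ = exp (K ^ 2 * a * ‖g‖ ^ 2) := by
              rw [norm_smul, mul_pow, norm_eq_abs, sq_abs, hc]
              congr 1
              ring

end StdGaussian

lemma integral_exp_mul_sq_gaussianReal {b : ℝ} (hb : b < 1 / 2) :
    ∫ x, exp (b * x ^ 2) ∂(gaussianReal 0 1) = (1 - 2 * b) ^ (-(1 : ℝ) / 2) := by
  have hb' : 0 < 1 / 2 - b := by linarith
  have hdensity : ∀ x : ℝ, gaussianPDFReal 0 1 x • exp (b * x ^ 2)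
      = (√(2 * π))⁻¹ * exp (-(1 / 2 - b) * x ^ 2) := by
    intro x
    simp only [gaussianPDFReal_def, NNReal.coe_one, mul_one, sub_zero, smul_eq_mul]
    rw [mul_assoc, ← exp_add]
    congr 2
    ring
  rw [integral_gaussianReal_eq_integral_smul one_ne_zero]
  simp_rw [hdensity]
  rw [integral_const_mul, integral_gaussian, ← sqrt_inv, ← sqrt_mul (by positivity),
    show (2 * π)⁻¹ * (π / (1 / 2 - b)) = (1 - 2 * b)⁻¹ by field_simp,
    sqrt_eq_rpow, inv_rpow (by linarith), ← rpow_neg (by linarith), neg_div]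

section EuclideanSpace

variable {ι : Type*} [Fintype ι]

lemma integral_exp_mul_sq_norm_stdGaussian {b : ℝ} (hb : b < 1 / 2) :
    ∫ g, exp (b * ‖g‖ ^ 2) ∂(stdGaussian (EuclideanSpace ℝ ι))
      = (1 - 2 * b) ^ (-(Fintype.card ι : ℝ) / 2) := by
  rw [← map_pi_eq_stdGaussian, integral_map (by fun_prop) (by fun_prop)]
  simp_rw [EuclideanSpace.norm_sq_eq, Real.norm_eq_abs, sq_abs, Finset.mul_sum, exp_sum]
  rw [integral_fintype_prod_eq_pow (fun x ↦ exp (b * x ^ 2)), integral_exp_mul_sq_gaussianReal hb,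
    ← rpow_natCast, ← rpow_mul (by linarith)]
  congr 1
  ring

lemma integrable_exp_mul_sq_norm_stdGaussian {b : ℝ} (hb : b < 1 / 2) :
    Integrable (fun g ↦ exp (b * ‖g‖ ^ 2)) (stdGaussian (EuclideanSpace ℝ ι)) :=
  .of_integral_ne_zero <| by
    rw [integral_exp_mul_sq_norm_stdGaussian hb]
    exact (rpow_pos_of_pos (by linarith) _).ne'

theorem integral_exp_mul_sq_norm_le_of_subgaussian {Ω : Type*} [MeasurableSpace Ω]
    {μ : Measure Ω} [SFinite μ] {X : Ω → EuclideanSpace ℝ ι} (hX : Measurable X) {K a : ℝ}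
    (hsg : ∀ θ, ∫ ω, exp ⟪θ, X ω⟫ ∂μ ≤ exp (K ^ 2 * ‖θ‖ ^ 2 / 2))
    (ha0 : 0 ≤ a) (ha : 2 * K ^ 2 * a < 1) :
    ∫ ω, exp (a * ‖X ω‖ ^ 2) ∂μ ≤ (1 - 2 * K ^ 2 * a) ^ (-(Fintype.card ι : ℝ) / 2) := by
  have hb : K ^ 2 * a < 1 / 2 := by linarith
  refine (integral_exp_mul_sq_norm_le_integral_stdGaussian hX ha0 hsg
    (integrable_exp_mul_sq_norm_stdGaussian hb)).trans_eq ?_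
  rw [integral_exp_mul_sq_norm_stdGaussian hb, mul_assoc]

end EuclideanSpace

theorem subgaussian_squared_norm_mgf_bound_general
    {d : ℕ} {Ω : Type*} [MeasurableSpace Ω] (μ : Measure Ω) [IsProbabilityMeasure μ]
    (X : Ω → EuclideanSpace ℝ (Fin d)) (hX : Measurable X)
    (K : ℝ)
    (hsg : ∀ θ : EuclideanSpace ℝ (Fin d),
      ∫ ω, Real.exp ((inner ℝ θ (X ω) : ℝ)) ∂μ ≤ Real.exp (K ^ 2 * ‖θ‖ ^ 2 / 2))
    (a : ℝ) (ha0 : 0 < a) (ha : a < 1 / (2 * K ^ 2)) :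
    (∫ ω, Real.exp (a * ‖X ω‖ ^ 2) ∂μ ≤ (1 - 2 * K ^ 2 * a) ^ (-(d : ℝ) / 2)) ∧
    (∫ ω, Real.exp (‖X ω‖ ^ 2 / (4 * K ^ 2)) ∂μ ≤ (2 : ℝ) ^ ((d : ℝ) / 2)) := by
  have hK : K ≠ 0 := by
    rintro rfl
    linarith [show a < 0 by simpa using ha]
  have hmgf : ∀ a, 0 < a → a < 1 / (2 * K ^ 2) →
      ∫ ω, exp (a * ‖X ω‖ ^ 2) ∂μ ≤ (1 - 2 * K ^ 2 * a) ^ (-(d : ℝ) / 2) := fun a ha0 ha ↦ by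
    simpa using integral_exp_mul_sq_norm_le_of_subgaussian hX hsg ha0.le
      (by rwa [lt_div_iff₀ (by positivity), mul_comm] at ha)
  refine ⟨hmgf a ha0 ha, ?_⟩
  have hquarter := hmgf (1 / (4 * K ^ 2)) (by positivity) (by gcongr; linarith)
  have hhalf : 1 - 2 * K ^ 2 * (1 / (4 * K ^ 2)) = 2⁻¹ := by field_simp; norm_num
  rw [hhalf, neg_div, rpow_neg (by norm_num), inv_rpow (by norm_num), inv_inv] at hquarter
  simpa only [one_div_mul_eq_div] using hquarter

/-- Let `X` be a centered `K`-subgaussian random vector in `ℝ^d`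
(i.e. `E X = 0` and `E[exp⟨θ, X⟩] ≤ exp(K²‖θ‖²/2)` for all `θ`), and let
`0 < a < 1/(2K²)`. Then `E[exp(a‖X‖²)] ≤ (1 − 2K²a)^{−d/2}`. In particular, for
`a = 1/(4K²)` one gets `E[exp(‖X‖²/(4K²))] ≤ 2^{d/2}`. -/
theorem subgaussian_squared_norm_mgf_bound
    {d : ℕ} {Ω : Type*} [MeasurableSpace Ω] (μ : Measure Ω) [IsProbabilityMeasure μ]
    (X : Ω → EuclideanSpace ℝ (Fin d)) (hX : Measurable X)
    (hcentered : (∫ ω, X ω ∂μ) = 0) (K : ℝ) (hK : 0 < K)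
    (hsg : ∀ θ : EuclideanSpace ℝ (Fin d),
      ∫ ω, Real.exp ((inner ℝ θ (X ω) : ℝ)) ∂μ ≤ Real.exp (K ^ 2 * ‖θ‖ ^ 2 / 2))
    (a : ℝ) (ha0 : 0 < a) (ha : a < 1 / (2 * K ^ 2)) :
    (∫ ω, Real.exp (a * ‖X ω‖ ^ 2) ∂μ ≤ (1 - 2 * K ^ 2 * a) ^ (-(d : ℝ) / 2)) ∧
    (∫ ω, Real.exp (‖X ω‖ ^ 2 / (4 * K ^ 2)) ∂μ ≤ (2 : ℝ) ^ ((d : ℝ) / 2)) :=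
  subgaussian_squared_norm_mgf_bound_general μ X hX K hsg a ha0 ha
end

section
/- For λ > 0, p ∈ [0,1] and k ∈ ℕ, define μ_{λ,k}(p) = λ·p·P[B_{k,p} < k/(λ+1)] + (1−p)·P[B_{k,p} > k/(λ+1)], where B_{k,p} is a binomial random variable with k trials and success probability p. Then for every λ > 0 and every p ∈ [0,1], μ_{λ,k}(p) → min(λ·p, 1−p) as k → ∞. -/
open Finset Filter


/-- The binomial pmf weight. -/
noncomputable def binomW (p : ℝ) (k m : ℕ) : ℝ :=
  (k.choose m : ℝ) * p ^ m * (1 - p) ^ (k - m)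

lemma binomW_eval (p : ℝ) (k m : ℕ) :
    binomW p k m = (bernsteinPolynomial ℝ k m).eval p := by
  simp [binomW, bernsteinPolynomial]

lemma binomW_nonneg {p : ℝ} (hp0 : 0 ≤ p) (hp1 : p ≤ 1) (k m : ℕ) :
    0 ≤ binomW p k m := by
  have h1 : (0:ℝ) ≤ 1 - p := by linarith
  unfold binomW
  positivity

lemma binomW_sum (p : ℝ) (k : ℕ) :
    ∑ m ∈ range (k + 1), binomW p k m = 1 := by
  have h := bernsteinPolynomial.sum ℝ k
  have := congrArg (Polynomial.eval p) h
  simpa [Polynomial.eval_finset_sum, binomW_eval] using this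

lemma binomW_var (p : ℝ) (k : ℕ) :
    ∑ m ∈ range (k + 1), ((k:ℝ) * p - m) ^ 2 * binomW p k m = (k:ℝ) * p * (1 - p) := by
  have h := bernsteinPolynomial.variance (R := ℝ) k
  have := congrArg (Polynomial.eval p) h
  simp only [Polynomial.eval_finset_sum, Polynomial.eval_mul, Polynomial.eval_pow,
    Polynomial.eval_sub, Polynomial.eval_smul, Polynomial.eval_natCast, Polynomial.eval_X,
    Polynomial.eval_one, smul_eq_mul] at this
  simpa [binomW_eval] using this

/-- Chebyshev-type bound. -/
lemma binomW_cheb {p : ℝ} (hp0 : 0 ≤ p) (hp1 : p ≤ 1) (k : ℕ) (c : ℕ → Prop)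
    [DecidablePred c] {a : ℝ} (ha : 0 < a)
    (h : ∀ m, m ≤ k → c m → a ≤ |(k:ℝ) * p - m|) :
    (∑ m ∈ range (k + 1), if c m then binomW p k m else 0) ≤ (k:ℝ) * p * (1 - p) / a ^ 2 := by
  rw [le_div_iff₀ (by positivity), Finset.sum_mul]
  rw [← binomW_var p k]
  apply Finset.sum_le_sum
  intro m hm
  by_cases hc : c m
  · simp only [hc, if_true]
    have h1 : a ^ 2 ≤ ((k:ℝ) * p - m) ^ 2 := by
      have := h m (Finset.mem_range_succ_iff.mp hm) hc
      nlinarith [abs_nonneg ((k:ℝ)*p - m), sq_abs ((k:ℝ)*p - m), neg_abs_le ((k:ℝ)*p - m)]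
    have := binomW_nonneg hp0 hp1 k m
    nlinarith
  · simp only [hc, if_false, zero_mul]
    have := binomW_nonneg hp0 hp1 k m
    positivity

lemma binomW_step {p : ℝ} {k j : ℕ} (hj : j < k) :
    ((j:ℝ) + 1) * (1 - p) * binomW p k (j + 1) = ((k:ℝ) - j) * p * binomW p k j := by
  have h1 : (k.choose (j+1) : ℝ) * ((j:ℝ) + 1) = (k.choose j : ℝ) * ((k:ℝ) - (j:ℝ)) := by
    have := Nat.choose_succ_right_eq k j
    have hc : ((k - j : ℕ) : ℝ) = (k:ℝ) - j := by
      rw [Nat.cast_sub hj.le]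
    rw [← hc]
    exact_mod_cast this
  have h2 : k - j = (k - (j+1)) + 1 := by omega
  unfold binomW
  rw [h2, pow_succ, pow_succ]
  linear_combination (p ^ j * p * (1 - p) ^ (k - (j+1)) * (1 - p)) * h1

lemma binomW_telescope {p : ℝ} {k m0 : ℕ} (hm : m0 ≤ k) :
    (m0:ℝ) * (1 - p) * binomW p k m0
      = ∑ j ∈ range m0, ((k:ℝ) * p - j) * binomW p k j := by
  have key : ∀ j ∈ range m0, ((k:ℝ) * p - j) * binomW p k j
      = (((j+1:ℕ)):ℝ) * (1 - p) * binomW p k (j+1) - (j:ℝ) * (1 - p) * binomW p k j := by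
    intro j hj
    push_cast
    rw [binomW_step (lt_of_lt_of_le (mem_range.mp hj) hm)]
    ring
  rw [Finset.sum_congr rfl key]
  rw [Finset.sum_range_sub (f := fun j => (j:ℝ) * (1 - p) * binomW p k j)]
  simp

/-- The atom bound: `P[B = kp] ≤ 1/√(kpq)`. -/
lemma binomW_atom {p : ℝ} (hp0 : 0 < p) (hp1 : p < 1) {k m0 : ℕ} (hk : 1 ≤ k)
    (hm : (m0:ℝ) = (k:ℝ) * p) :
    binomW p k m0 ≤ Real.sqrt (((k:ℝ) * (p * (1 - p)))⁻¹) := by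
  have hq : 0 < 1 - p := by linarith
  have hkR : (0:ℝ) < k := by exact_mod_cast hk
  set V : ℝ := (k:ℝ) * p * (1 - p) with hVdef
  have hV : 0 < V := by positivity
  set c : ℝ := Real.sqrt V with hcdef
  have hc : 0 < c := Real.sqrt_pos.mpr hV
  have hc2 : c ^ 2 = V := Real.sq_sqrt hV.le
  have hm0k : m0 ≤ k := by
    have : (m0:ℝ) ≤ (k:ℝ) := by rw [hm]; nlinarith
    exact_mod_cast this
  have htel := binomW_telescope (p := p) hm0k
  have hw : ∀ m, 0 ≤ binomW p k m := binomW_nonneg hp0.le hp1.le k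
  have hstep : ∀ j ∈ range m0, ((k:ℝ) * p - j) * binomW p k j
      ≤ (((k:ℝ) * p - j)^2 + c^2) / (2*c) * binomW p k j := by
    intro j _
    apply mul_le_mul_of_nonneg_right _ (hw j)
    rw [le_div_iff₀ (by positivity)]
    nlinarith [sq_nonneg ((k:ℝ)*p - j - c)]
  have hsub : range m0 ⊆ range (k+1) := Finset.range_subset_range.mpr (by omega)
  have hbig : ∑ j ∈ range m0, (((k:ℝ) * p - j)^2 + c^2) / (2*c) * binomW p k j
      ≤ ∑ j ∈ range (k+1), (((k:ℝ) * p - j)^2 + c^2) / (2*c) * binomW p k j := by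
    apply Finset.sum_le_sum_of_subset_of_nonneg hsub
    intro j _ _
    have := hw j
    positivity
  have hval : ∑ j ∈ range (k+1), (((k:ℝ) * p - j)^2 + c^2) / (2*c) * binomW p k j = c := by
    have expand : ∀ j ∈ range (k+1), (((k:ℝ) * p - j)^2 + c^2) / (2*c) * binomW p k j
        = (1/(2*c)) * (((k:ℝ) * p - j)^2 * binomW p k j) + (c^2/(2*c)) * binomW p k j := by
      intro j _; field_simp
    rw [Finset.sum_congr rfl expand, Finset.sum_add_distrib, ← Finset.mul_sum, ← Finset.mul_sum,
      binomW_var, binomW_sum, ← hVdef, ← hc2]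
    field_simp
    ring
  have key : V * binomW p k m0 ≤ c := by
    calc V * binomW p k m0 = (m0:ℝ) * (1 - p) * binomW p k m0 := by rw [hm, hVdef]
    _ = _ := htel
    _ ≤ _ := Finset.sum_le_sum hstep
    _ ≤ _ := hbig
    _ = c := hval
  have hfin : binomW p k m0 ≤ c / V := by
    rw [le_div_iff₀ hV]
    linarith [key]
  calc binomW p k m0 ≤ c / V := hfin
    _ = c⁻¹ := by rw [← hc2, sq, div_self_mul_self']
    _ = Real.sqrt (((k:ℝ) * (p * (1 - p)))⁻¹) := by
        rw [Real.sqrt_inv, hcdef, hVdef, mul_assoc]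

/-- `P[B_{k,p} < t]` for a binomial random variable `B_{k,p}` with `k` trials and
success probability `p`. -/
noncomputable def binomCdfLt (k : ℕ) (p : ℝ) (t : ℝ) : ℝ :=
  ∑ m ∈ Finset.range (k + 1),
    if (m : ℝ) < t then (k.choose m : ℝ) * p ^ m * (1 - p) ^ (k - m) else 0

/-- `P[B_{k,p} > t]` for a binomial random variable `B_{k,p}` with `k` trials and
success probability `p`. -/
noncomputable def binomCdfGt (k : ℕ) (p : ℝ) (t : ℝ) : ℝ :=
  ∑ m ∈ Finset.range (k + 1),
    if (m : ℝ) > t then (k.choose m : ℝ) * p ^ m * (1 - p) ^ (k - m) else 0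

/-- The asymptotic `λ`-weighted classification risk of the `k`-nearest-neighbor classifier
at a point with posterior probability `p` of class `P`:
`μ_{λ,k}(p) = λ·p·P[B_{k,p} < k/(λ+1)] + (1−p)·P[B_{k,p} > k/(λ+1)]`. -/
noncomputable def knnWeightedRisk (l : ℝ) (k : ℕ) (p : ℝ) : ℝ :=
  l * p * binomCdfLt k p ((k : ℝ) / (l + 1)) + (1 - p) * binomCdfGt k p ((k : ℝ) / (l + 1))


lemma binomCdfLt_eq (k : ℕ) (p t : ℝ) :
    binomCdfLt k p t = ∑ m ∈ range (k + 1), if (m:ℝ) < t then binomW p k m else 0 := rfl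

lemma binomCdfGt_eq (k : ℕ) (p t : ℝ) :
    binomCdfGt k p t = ∑ m ∈ range (k + 1), if t < (m:ℝ) then binomW p k m else 0 := rfl

lemma sum_ite_not_compl (k : ℕ) (p : ℝ) (c : ℕ → Prop) [DecidablePred c] :
    (∑ m ∈ range (k + 1), if c m then binomW p k m else 0)
      + (∑ m ∈ range (k + 1), if ¬ c m then binomW p k m else 0) = 1 := by
  rw [← Finset.sum_add_distrib, ← binomW_sum p k]
  apply Finset.sum_congr rfl
  intro m _
  by_cases h : c m <;> simp [h]

lemma sum_ite_nonneg {p : ℝ} (hp0 : 0 ≤ p) (hp1 : p ≤ 1) (k : ℕ) (c : ℕ → Prop)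
    [DecidablePred c] :
    0 ≤ ∑ m ∈ range (k + 1), if c m then binomW p k m else 0 := by
  apply Finset.sum_nonneg
  intro m _
  split
  · exact binomW_nonneg hp0 hp1 k m
  · exact le_rfl

lemma sum_trichotomy (k : ℕ) (p t : ℝ) :
    binomCdfLt k p t + binomCdfGt k p t
      + (∑ m ∈ range (k + 1), if (m:ℝ) = t then binomW p k m else 0) = 1 := by
  rw [binomCdfLt_eq, binomCdfGt_eq, ← Finset.sum_add_distrib, ← Finset.sum_add_distrib,
    ← binomW_sum p k]
  apply Finset.sum_congr rfl
  intro m _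
  rcases lt_trichotomy ((m:ℝ)) t with h | h | h
  · simp [h, asymm h, h.ne]
  · simp [h, lt_irrefl]
  · simp [h, asymm h, h.ne']


set_option maxHeartbeats 2000000 in
/-- For every `λ > 0` and `p ∈ [0,1]`,
`μ_{λ,k}(p) → min(λ·p, 1−p)` as `k → ∞`. -/
theorem knnWeightedRisk_tendsto_min
    (l : ℝ) (hl : 0 < l) (p : ℝ) (hp0 : 0 ≤ p) (hp1 : p ≤ 1) :
    Filter.Tendsto (fun k : ℕ => knnWeightedRisk l k p) Filter.atTop
      (nhds (min (l * p) (1 - p))) := by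
  have hl1 : (0:ℝ) < l + 1 := by linarith
  have hq0 : 0 ≤ 1 - p := by linarith
  have hlp0 : 0 ≤ l * p := by positivity
  rcases lt_trichotomy (l * p) (1 - p) with hlt | heq | hgt
  · -- Case l*p < 1-p : limit is l*p, p < 1/(l+1)
    rw [min_eq_left hlt.le, ← tendsto_sub_nhds_zero_iff]
    set δ : ℝ := 1 / (l + 1) - p with hδdef
    have hδ : 0 < δ := by
      have h1 : p * (l + 1) < 1 := by nlinarith
      have h2 : p < 1 / (l + 1) := (lt_div_iff₀ hl1).mpr h1
      simpa [hδdef] using sub_pos.mpr h2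
    set D : ℝ := p * (1 - p) / δ ^ 2 with hDdef
    set C : ℝ := (l * p + (1 - p)) * D with hCdef
    apply squeeze_zero_norm' (a := fun k : ℕ => C / k) _
      (tendsto_const_div_atTop_nhds_zero_nat C)
    filter_upwards [Filter.eventually_ge_atTop 1] with k hk
    have hkR : (1:ℝ) ≤ (k:ℝ) := by exact_mod_cast hk
    have hkpos : (0:ℝ) < k := by linarith
    set t : ℝ := (k:ℝ) / (l + 1) with htdef
    have ht : t = (k:ℝ) * p + δ * k := by
      rw [htdef, hδdef]; field_simp; ring
    have ha : (0:ℝ) < δ * k := by positivity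
    set B : ℝ := (k:ℝ) * p * (1 - p) / (δ * k) ^ 2 with hBdef
    have hcheb : (∑ m ∈ range (k + 1), if ¬ ((m:ℝ) < t) then binomW p k m else 0) ≤ B := by
      apply binomW_cheb hp0 hp1 k _ ha
      intro m _ hc
      have h1 : t ≤ (m:ℝ) := not_lt.mp hc
      rw [le_abs]
      right
      rw [ht] at h1
      linarith
    have hBD : B = D / k := by
      rw [hBdef, hDdef]
      field_simp
    have hsplit := sum_ite_not_compl k p (fun m => (m:ℝ) < t)
    have hGtle : binomCdfGt k p t
        ≤ ∑ m ∈ range (k + 1), if ¬ ((m:ℝ) < t) then binomW p k m else 0 := by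
      rw [binomCdfGt_eq]
      apply Finset.sum_le_sum
      intro m _
      by_cases h : t < (m:ℝ)
      · simp [h, asymm h]
      · simp only [h, if_false]
        split
        · exact binomW_nonneg hp0 hp1 k m
        · exact le_rfl
    have hGt0 : 0 ≤ binomCdfGt k p t := by
      rw [binomCdfGt_eq]; exact sum_ite_nonneg hp0 hp1 k _
    have hLt1a : 1 - binomCdfLt k p t
        = ∑ m ∈ range (k + 1), if ¬ ((m:ℝ) < t) then binomW p k m else 0 := by
      rw [binomCdfLt_eq]; linarith [hsplit]
    have hLtB : 1 - binomCdfLt k p t ≤ B := by rw [hLt1a]; exact hcheb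
    have hLt0 : 0 ≤ 1 - binomCdfLt k p t := by
      rw [hLt1a]; exact sum_ite_nonneg hp0 hp1 k _
    have hGtB : binomCdfGt k p t ≤ B := le_trans hGtle hcheb
    have hdiff : knnWeightedRisk l k p - l * p
        = l * p * (binomCdfLt k p t - 1) + (1 - p) * binomCdfGt k p t := by
      rw [knnWeightedRisk, htdef]; ring
    rw [Real.norm_eq_abs, hdiff, abs_le]
    have h1 : l * p * (1 - binomCdfLt k p t) ≤ l * p * B :=
      mul_le_mul_of_nonneg_left hLtB hlp0
    have h2 : (1 - p) * binomCdfGt k p t ≤ (1 - p) * B := mul_le_mul_of_nonneg_left hGtB hq0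
    have h3 : 0 ≤ l * p * (1 - binomCdfLt k p t) := mul_nonneg hlp0 hLt0
    have h4 : 0 ≤ (1 - p) * binomCdfGt k p t := mul_nonneg hq0 hGt0
    have hCk : (l * p + (1 - p)) * B = C / k := by rw [hBD, hCdef]; ring
    constructor <;> nlinarith [h1, h2, h3, h4, hCk]
  · -- Case l*p = 1-p : boundary, p = 1/(l+1)
    have hpe : p * (l + 1) = 1 := by linarith [heq]
    have hp0' : 0 < p := by nlinarith
    have hp1' : p < 1 := by nlinarith
    rw [min_eq_left heq.le, ← tendsto_sub_nhds_zero_iff]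
    apply squeeze_zero_norm'
      (a := fun k : ℕ => l * p * Real.sqrt (((k:ℝ) * (p * (1 - p)))⁻¹))
    · filter_upwards [Filter.eventually_ge_atTop 1] with k hk
      set t : ℝ := (k:ℝ) / (l + 1) with htdef
      have ht : t = (k:ℝ) * p := by
        rw [htdef, div_eq_iff hl1.ne']
        linear_combination (-(k:ℝ)) * hpe
      set Ea : ℝ := ∑ m ∈ range (k + 1), if (m:ℝ) = t then binomW p k m else 0 with hEadef
      have hEa0 : 0 ≤ Ea := sum_ite_nonneg hp0 hp1 k _
      have htri := sum_trichotomy k p t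
      have hdiff : knnWeightedRisk l k p - l * p = -(l * p * Ea) := by
        rw [knnWeightedRisk, ← htdef, ← heq]
        rw [← hEadef] at htri
        linear_combination (l * p) * htri
      have hEaB : Ea ≤ Real.sqrt (((k:ℝ) * (p * (1 - p)))⁻¹) := by
        by_cases hex : ∃ m0 : ℕ, (m0:ℝ) = (k:ℝ) * p
        · obtain ⟨m0, hm0⟩ := hex
          have hcong : ∀ m ∈ range (k + 1),
              (if (m:ℝ) = t then binomW p k m else 0)
                = if m = m0 then binomW p k m else 0 := by
            intro m _
            congr 1
            rw [ht, ← hm0]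
            simp [Nat.cast_inj, eq_comm]
          rw [hEadef, Finset.sum_congr rfl hcong, Finset.sum_ite_eq' (range (k+1)) m0]
          split
          · exact binomW_atom hp0' hp1' hk hm0
          · positivity
        · have : ∀ m ∈ range (k + 1), (if (m:ℝ) = t then binomW p k m else 0) = 0 := by
            intro m _
            rw [if_neg]
            intro h
            exact hex ⟨m, by rw [h, ht]⟩
          rw [hEadef, Finset.sum_congr rfl this, Finset.sum_const_zero]
          positivity
      rw [Real.norm_eq_abs, hdiff, abs_neg, abs_of_nonneg (by positivity)]
      exact mul_le_mul_of_nonneg_left hEaB hlp0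
    · have h1 : Tendsto (fun k : ℕ => ((k:ℝ) * (p * (1 - p)))⁻¹) atTop (nhds 0) := by
        apply (tendsto_const_div_atTop_nhds_zero_nat ((p * (1 - p))⁻¹)).congr
        intro k
        rw [show ((k:ℝ) * (p * (1 - p)))⁻¹ = (k:ℝ)⁻¹ * (p * (1 - p))⁻¹ from mul_inv _ _,
          div_eq_mul_inv, mul_comm]
      have h2 : Tendsto (fun k : ℕ => Real.sqrt (((k:ℝ) * (p * (1 - p)))⁻¹)) atTop (nhds 0) := by
        have h2' := (Real.continuous_sqrt.tendsto 0).comp h1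
        rw [Real.sqrt_zero] at h2'
        exact h2'
      simpa using h2.const_mul (l * p)
  · -- Case 1-p < l*p : limit is 1-p, p > 1/(l+1)
    rw [min_eq_right hgt.le, ← tendsto_sub_nhds_zero_iff]
    set δ : ℝ := p - 1 / (l + 1) with hδdef
    have hδ : 0 < δ := by
      have h1 : 1 < p * (l + 1) := by nlinarith
      have h2 : 1 / (l + 1) < p := (div_lt_iff₀ hl1).mpr (by linarith)
      simpa [hδdef] using sub_pos.mpr h2
    set D : ℝ := p * (1 - p) / δ ^ 2 with hDdef
    set C : ℝ := (l * p + (1 - p)) * D with hCdef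
    apply squeeze_zero_norm' (a := fun k : ℕ => C / k) _
      (tendsto_const_div_atTop_nhds_zero_nat C)
    filter_upwards [Filter.eventually_ge_atTop 1] with k hk
    have hkR : (1:ℝ) ≤ (k:ℝ) := by exact_mod_cast hk
    have hkpos : (0:ℝ) < k := by linarith
    set t : ℝ := (k:ℝ) / (l + 1) with htdef
    have ht : t = (k:ℝ) * p - δ * k := by
      rw [htdef, hδdef]; field_simp; ring
    have ha : (0:ℝ) < δ * k := by positivity
    set B : ℝ := (k:ℝ) * p * (1 - p) / (δ * k) ^ 2 with hBdef
    have hcheb : (∑ m ∈ range (k + 1), if ¬ (t < (m:ℝ)) then binomW p k m else 0) ≤ B := by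
      apply binomW_cheb hp0 hp1 k _ ha
      intro m _ hc
      have h1 : (m:ℝ) ≤ t := not_lt.mp hc
      rw [le_abs]
      left
      rw [ht] at h1
      linarith
    have hBD : B = D / k := by
      rw [hBdef, hDdef]
      field_simp
    have hsplit := sum_ite_not_compl k p (fun m => t < (m:ℝ))
    have hLtle : binomCdfLt k p t
        ≤ ∑ m ∈ range (k + 1), if ¬ (t < (m:ℝ)) then binomW p k m else 0 := by
      rw [binomCdfLt_eq]
      apply Finset.sum_le_sum
      intro m _
      by_cases h : (m:ℝ) < t
      · simp [h, asymm h]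
      · simp only [h, if_false]
        split
        · exact binomW_nonneg hp0 hp1 k m
        · exact le_rfl
    have hLt0 : 0 ≤ binomCdfLt k p t := by
      rw [binomCdfLt_eq]; exact sum_ite_nonneg hp0 hp1 k _
    have hGt1a : 1 - binomCdfGt k p t
        = ∑ m ∈ range (k + 1), if ¬ (t < (m:ℝ)) then binomW p k m else 0 := by
      rw [binomCdfGt_eq]; linarith [hsplit]
    have hGtB : 1 - binomCdfGt k p t ≤ B := by rw [hGt1a]; exact hcheb
    have hGt0 : 0 ≤ 1 - binomCdfGt k p t := by
      rw [hGt1a]; exact sum_ite_nonneg hp0 hp1 k _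
    have hLtB : binomCdfLt k p t ≤ B := le_trans hLtle hcheb
    have hdiff : knnWeightedRisk l k p - (1 - p)
        = l * p * binomCdfLt k p t + (1 - p) * (binomCdfGt k p t - 1) := by
      rw [knnWeightedRisk, htdef]; ring
    rw [Real.norm_eq_abs, hdiff, abs_le]
    have h1 : l * p * binomCdfLt k p t ≤ l * p * B := mul_le_mul_of_nonneg_left hLtB hlp0
    have h2 : (1 - p) * (1 - binomCdfGt k p t) ≤ (1 - p) * B :=
      mul_le_mul_of_nonneg_left hGtB hq0
    have h3 : 0 ≤ l * p * binomCdfLt k p t := mul_nonneg hlp0 hLt0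
    have h4 : 0 ≤ (1 - p) * (1 - binomCdfGt k p t) := mul_nonneg hq0 hGt0
    have hCk : (l * p + (1 - p)) * B = C / k := by rw [hBD, hCdef]; ring
    constructor <;> nlinarith [h1, h2, h3, h4, hCk]
end

section
/- Let λ > 0, k ∈ ℕ and 0 ≤ p < 1/(λ+1), and let B_{k,p} be a binomial random variable with k trials and success probability p. Then P[B_{k,p} > k/(λ+1)] ≤ exp(−2k·(1/(λ+1) − p)²), and consequently the weighted risk μ_{λ,k}(p) = λ·p·P[B_{k,p} < k/(λ+1)] + (1−p)·P[B_{k,p} > k/(λ+1)] satisfies μ_{λ,k}(p) ≤ λ·p + (1 − (λ+1)·p)·exp(−2k·(1/(λ+1) − p)²). -/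
/-!
The tail bound is the Chernoff–Hoeffding argument: for `t ≥ 0` the indicator of `m > a` is at
most `exp (t * (m - a))`, so by the binomial theorem `P[B_{k,p} > a] ≤ e^{-ta} (1 + p(e^t - 1))^k`,
and Hoeffding's lemma for a Bernoulli variable bounds `1 + p(e^t - 1)` by `exp (p t + t²/8)`.
For the risk, `P[B < a] ≤ 1 - P[B > a]` gives
`μ_{λ,k}(p) ≤ λp + (1 - (λ+1)p) P[B > a]`, whose coefficient is nonnegative when `p < 1/(λ+1)`.
-/

open Real Finset MeasureTheory ProbabilityTheory

/-- Hoeffding's lemma for a Bernoulli variable `B` of mean `p`: the left side is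
`exp (p * t) * 𝔼[exp (t * (B - p))]`. -/
lemma one_add_mul_exp_sub_one_le_exp {p : ℝ} (hp0 : 0 ≤ p) (hp1 : p ≤ 1) (t : ℝ) :
    1 + p * (exp t - 1) ≤ exp (p * t + t ^ 2 / 8) := by
  let q : unitInterval := ⟨p, hp0, hp1⟩
  let X : Bool → ℝ := fun b => if b then 1 else 0
  have hmean : ∫ b, X b ∂bernoulliMeasure true false q = p := by
    simp [X, q, integral_bernoulliMeasure]
  have hoeffding := (hasSubgaussianMGF_of_mem_Icc (μ := bernoulliMeasure true false q) (a := 0)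
    (b := 1) (Measurable.of_discrete (f := X)).aemeasurable
    (ae_of_all _ fun b => by cases b <;> simp [X])).mgf_le t
  simp only [mgf, hmean, integral_bernoulliMeasure] at hoeffding
  norm_num [X, q] at hoeffding
  have h1 : exp (p * t) * exp (t * (1 - p)) = exp t := by rw [← exp_add]; ring_nf
  have h0 : exp (p * t) * exp (-(t * p)) = 1 := by rw [← exp_add, ← exp_zero]; ring_nf
  calc 1 + p * (exp t - 1)
      = exp (p * t) * (p * exp (t * (1 - p)) + (1 - p) * exp (-(t * p))) := by
        linear_combination (-p) * h1 + (p - 1) * h0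
    _ ≤ exp (p * t) * exp (1 / 4 * t ^ 2 / 2) := by gcongr
    _ = exp (p * t + t ^ 2 / 8) := by rw [← exp_add]; ring_nf

lemma sum_choose_mul_pow_mul_pow (k : ℕ) (p x : ℝ) :
    ∑ m ∈ range (k + 1), (k.choose m : ℝ) * p ^ m * (1 - p) ^ (k - m) * x ^ m
      = (p * x + (1 - p)) ^ k := by
  rw [add_pow]
  refine sum_congr rfl fun m _ => ?_
  ring

lemma binomCdfLt_add_binomCdfGt_le_one {k : ℕ} {p : ℝ} (hp0 : 0 ≤ p) (hp1 : p ≤ 1) (t : ℝ) :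
    binomCdfLt k p t + binomCdfGt k p t ≤ 1 := by
  rw [binomCdfLt, binomCdfGt, ← sum_add_distrib]
  calc _ ≤ ∑ m ∈ range (k + 1), (k.choose m : ℝ) * p ^ m * (1 - p) ^ (k - m) := by
        refine sum_le_sum fun m _ => ?_
        have := binomial_nonneg (n := k) (k := m) (p := ⟨p, hp0, hp1⟩)
        split_ifs <;> linarith
    _ = 1 := by simpa using sum_choose_mul_pow_mul_pow k p 1

lemma binomCdfGt_le_exp_mul_pow {k : ℕ} {p t : ℝ} (hp0 : 0 ≤ p) (hp1 : p ≤ 1) (ht : 0 ≤ t)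
    (a : ℝ) : binomCdfGt k p a ≤ exp (-(t * a)) * (1 + p * (exp t - 1)) ^ k := by
  calc binomCdfGt k p a
      ≤ ∑ m ∈ range (k + 1), (k.choose m : ℝ) * p ^ m * (1 - p) ^ (k - m) * exp (t * (m - a)) := by
        refine sum_le_sum fun m _ => ?_
        have := binomial_nonneg (n := k) (k := m) (p := ⟨p, hp0, hp1⟩)
        split_ifs with hgt
        · exact le_mul_of_one_le_right this (one_le_exp (by nlinarith))
        · positivity
    _ = exp (-(t * a)) *
          ∑ m ∈ range (k + 1), (k.choose m : ℝ) * p ^ m * (1 - p) ^ (k - m) * exp t ^ m := by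
        rw [mul_sum]
        refine sum_congr rfl fun m _ => ?_
        rw [show exp (t * (m - a)) = exp (-(t * a)) * exp t ^ m by
          rw [← exp_nat_mul, ← exp_add]; ring_nf]
        ring
    _ = exp (-(t * a)) * (1 + p * (exp t - 1)) ^ k := by
        rw [sum_choose_mul_pow_mul_pow]; ring

theorem binomCdfGt_le_exp {k : ℕ} {p ε : ℝ} (hp0 : 0 ≤ p) (hp1 : p ≤ 1) (hε : 0 ≤ ε) :
    binomCdfGt k p (k * (p + ε)) ≤ exp (-2 * k * ε ^ 2) := by
  -- `t = 4 * ε` minimises the exponent `-t * (p + ε) + p * t + t ^ 2 / 8`.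
  have hbase : 0 ≤ 1 + p * (exp (4 * ε) - 1) := by nlinarith [exp_pos (4 * ε)]
  calc binomCdfGt k p (k * (p + ε))
      ≤ exp (-(4 * ε * (k * (p + ε)))) * (1 + p * (exp (4 * ε) - 1)) ^ k :=
        binomCdfGt_le_exp_mul_pow hp0 hp1 (by positivity) _
    _ ≤ exp (-(4 * ε * (k * (p + ε)))) * exp (p * (4 * ε) + (4 * ε) ^ 2 / 8) ^ k := by
        gcongr
        exact one_add_mul_exp_sub_one_le_exp hp0 hp1 _
    _ = exp (-2 * k * ε ^ 2) := by rw [← exp_nat_mul, ← exp_add]; ring_nf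

lemma knnWeightedRisk_le {l : ℝ} {k : ℕ} {p : ℝ} (hl : 0 ≤ l) (hp0 : 0 ≤ p) (hp1 : p ≤ 1) :
    knnWeightedRisk l k p ≤ l * p + (1 - (l + 1) * p) * binomCdfGt k p ((k : ℝ) / (l + 1)) := by
  have hsum := binomCdfLt_add_binomCdfGt_le_one (k := k) hp0 hp1 ((k : ℝ) / (l + 1))
  calc knnWeightedRisk l k p
      ≤ l * p * (1 - binomCdfGt k p ((k : ℝ) / (l + 1)))
          + (1 - p) * binomCdfGt k p ((k : ℝ) / (l + 1)) := by
        rw [knnWeightedRisk]; gcongr; linarith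
    _ = _ := by ring

/-- (Hoeffding bound for the binomial tail and the resulting bound on the
weighted kNN risk.) For `λ > 0`, `k ∈ ℕ` and `0 ≤ p < 1/(λ+1)`,
`P[B_{k,p} > k/(λ+1)] ≤ exp(−2k·(1/(λ+1) − p)²)`, and consequently
`μ_{λ,k}(p) ≤ λ·p + (1 − (λ+1)·p)·exp(−2k·(1/(λ+1) − p)²)`. -/
theorem knnWeightedRisk_hoeffding_bound
    (l : ℝ) (hl : 0 < l) (k : ℕ) (p : ℝ) (hp0 : 0 ≤ p) (hp : p < 1 / (l + 1)) :
    binomCdfGt k p ((k : ℝ) / (l + 1)) ≤ Real.exp (-2 * k * (1 / (l + 1) - p) ^ 2) ∧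
    knnWeightedRisk l k p
      ≤ l * p + (1 - (l + 1) * p) * Real.exp (-2 * k * (1 / (l + 1) - p) ^ 2) := by
  have hl1 : 0 < l + 1 := by linarith
  have hp1 : p ≤ 1 := hp.le.trans ((div_le_one hl1).2 (by linarith))
  have htail : binomCdfGt k p ((k : ℝ) / (l + 1)) ≤ exp (-2 * k * (1 / (l + 1) - p) ^ 2) := by
    have := binomCdfGt_le_exp (k := k) hp0 hp1 (sub_nonneg.2 hp.le)
    rwa [add_sub_cancel, mul_one_div] at this
  refine ⟨htail, (knnWeightedRisk_le hl.le hp0 hp1).trans ?_⟩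
  have : p * (l + 1) < 1 := (lt_div_iff₀ hl1).1 hp
  gcongr
  linarith
end

section
/- Let P, Q, P̂, Q̂ be probability measures on a measurable space such that P̂ and Q̂ admit densities p̂, q̂ with respect to a common σ-finite measure ν, let λ ≥ 0, and let A = {z : λ·p̂(z) ≥ q̂(z)} be the plug-in likelihood-ratio classification set. Then λ·P(Aᶜ) + Q(A) ≤ ∫ min(λ·p̂, q̂) dν + λ·‖P − P̂‖_TV + ‖Q − Q̂‖_TV; that is, the true λ-weighted classification risk of the plug-in classifier exceeds the plug-in precision α_λ(P̂,Q̂) by at most λ‖P − P̂‖_TV + ‖Q − Q̂‖_TV. -/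
/-!
By the Jordan decomposition, a signed measure of total mass zero has positive and negative parts
of equal mass, so its total variation norm is the mass of the positive part, which dominates
`s A` for every `A`. Applied to `P − P̂` on `Aᶜ` and to `Q − Q̂` on `A`, this bounds the true risk
`λ·P(Aᶜ) + Q(A)` by the plug-in risk `λ·P̂(Aᶜ) + Q̂(A)` plus the two error terms; and for the
plug-in set `A` the plug-in risk is exactly `∫ min(λ·p̂, q̂) dν`, since `min(λ·p̂, q̂)` equals
`q̂` on `A` and `λ·p̂` off `A`.
-/

open MeasureTheory

/-- The total variation norm of a finite signed measure:
`‖μ‖_TV = (1/2)·|μ|(univ)`, where `|μ|` is the total variation measure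
(this matches `(1/2)·sup_A (μ(A) − μ(Aᶜ))`; for probability measures `P, P̂` this equals
`sup_A (P(A) − P̂(A))`). -/
noncomputable def tvNorm {α : Type*} [MeasurableSpace α] (μ : SignedMeasure α) : ℝ :=
  (μ.totalVariation Set.univ).toReal / 2

section

variable {α : Type*} [MeasurableSpace α]

namespace MeasureTheory.SignedMeasure

lemma tvNorm_eq_posPart_real_univ {s : SignedMeasure α} (hs : s Set.univ = 0) :
    tvNorm s = s.toJordanDecomposition.posPart.real Set.univ := by
  have hsplit := s.apply_eq_posPart_real_sub_negPart_real MeasurableSet.univ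
  rw [tvNorm, ← measureReal_def, totalVariation, measureReal_add_apply]
  linarith

lemma apply_le_tvNorm {s : SignedMeasure α} (hs : s Set.univ = 0) {A : Set α}
    (hA : MeasurableSet A) : s A ≤ tvNorm s := by
  rw [tvNorm_eq_posPart_real_univ hs, s.apply_eq_posPart_real_sub_negPart_real hA]
  have hpos := measureReal_mono (μ := s.toJordanDecomposition.posPart) (Set.subset_univ A)
  have hneg := measureReal_nonneg (μ := s.toJordanDecomposition.negPart) (s := A)
  linarith

end MeasureTheory.SignedMeasure

namespace MeasureTheory.Measure

lemma real_le_real_add_tvNorm {μ μ' : Measure α} [IsFiniteMeasure μ] [IsFiniteMeasure μ']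
    (hμμ' : μ Set.univ = μ' Set.univ) {A : Set α} (hA : MeasurableSet A) :
    μ.real A ≤ μ'.real A + tvNorm (μ.toSignedMeasure - μ'.toSignedMeasure) := by
  have hdiff : ∀ {B}, MeasurableSet B →
      (μ.toSignedMeasure - μ'.toSignedMeasure) B = μ.real B - μ'.real B :=
    fun hB => toSignedMeasure_sub_apply hB
  have hle := SignedMeasure.apply_le_tvNorm
    (by rw [hdiff .univ, measureReal_def, measureReal_def, hμμ', sub_self]) hA
  rw [hdiff hA] at hle
  linarith

lemma real_withDensity_ofReal {ν : Measure α} {f : α → ℝ} (hf : Integrable f ν)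
    (hf0 : 0 ≤ᵐ[ν] f) {B : Set α} (hB : MeasurableSet B) :
    (ν.withDensity fun x => ENNReal.ofReal (f x)).real B = ∫ x in B, f x ∂ν := by
  rw [measureReal_def, withDensity_apply _ hB,
    ← ofReal_integral_eq_lintegral_ofReal hf.restrict (ae_restrict_of_ae hf0)]
  exact ENNReal.toReal_ofReal (setIntegral_nonneg_of_ae_restrict (ae_restrict_of_ae hf0))

end MeasureTheory.Measure

lemma MeasureTheory.integral_min_eq_setIntegral_add_setIntegral_compl {ν : Measure α}
    {f g : α → ℝ} (hf : Measurable f) (hg : Measurable g) (hfi : Integrable f ν)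
    (hgi : Integrable g ν) :
    ∫ z, min (f z) (g z) ∂ν
      = ∫ z in {z | g z ≤ f z}, g z ∂ν + ∫ z in {z | g z ≤ f z}ᶜ, f z ∂ν := by
  have hA : MeasurableSet {z | g z ≤ f z} := measurableSet_le hg hf
  have hmin : Integrable (fun z => min (f z) (g z)) ν := hfi.inf hgi
  rw [← integral_add_compl hA hmin]
  congr 1
  · exact setIntegral_congr_fun hA fun z hz => min_eq_right hz
  · exact setIntegral_congr_fun hA.compl fun z hz => min_eq_left (le_of_not_ge hz)

end

theorem plugin_classifier_excess_risk_bound_general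
    {α : Type*} [MeasurableSpace α] (ν : Measure α)
    (P Q Phat Qhat : Measure α)
    [IsProbabilityMeasure P] [IsProbabilityMeasure Q]
    [IsProbabilityMeasure Phat] [IsProbabilityMeasure Qhat]
    (phat qhat : α → ℝ) (hp0 : ∀ x, 0 ≤ phat x) (hq0 : ∀ x, 0 ≤ qhat x)
    (hpmeas : Measurable phat) (hqmeas : Measurable qhat)
    (hpint : Integrable phat ν) (hqint : Integrable qhat ν)
    (hPhat : Phat = ν.withDensity (fun x => ENNReal.ofReal (phat x)))
    (hQhat : Qhat = ν.withDensity (fun x => ENNReal.ofReal (qhat x)))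
    (l : ℝ) (hl : 0 ≤ l) :
    l * (P {z | l * phat z ≥ qhat z}ᶜ).toReal + (Q {z | l * phat z ≥ qhat z}).toReal
      ≤ ∫ z, min (l * phat z) (qhat z) ∂ν
        + l * tvNorm (P.toSignedMeasure - Phat.toSignedMeasure)
        + tvNorm (Q.toSignedMeasure - Qhat.toSignedMeasure) := by
  set A : Set α := {z | qhat z ≤ l * phat z}
  have hA : MeasurableSet A := measurableSet_le hqmeas (hpmeas.const_mul l)
  have hprecision : ∫ z, min (l * phat z) (qhat z) ∂ν = l * Phat.real Aᶜ + Qhat.real A := by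
    rw [integral_min_eq_setIntegral_add_setIntegral_compl (hpmeas.const_mul l) hqmeas
      (hpint.const_mul l) hqint, hPhat, hQhat,
      Measure.real_withDensity_ofReal hpint (.of_forall hp0) hA.compl,
      Measure.real_withDensity_ofReal hqint (.of_forall hq0) hA, integral_const_mul, add_comm]
  have hP := Measure.real_le_real_add_tvNorm (μ := P) (μ' := Phat) (by simp) hA.compl
  have hQ := Measure.real_le_real_add_tvNorm (μ := Q) (μ' := Qhat) (by simp) hA
  have hlP := mul_le_mul_of_nonneg_left hP hl
  rw [hprecision, ← measureReal_def, ← measureReal_def]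
  linarith

/-- Let `P, Q, P̂, Q̂` be probability measures, with `P̂`, `Q̂` admitting
densities `p̂`, `q̂` with respect to a common σ-finite measure `ν`, let `λ ≥ 0`, and let
`A = {z : λ·p̂(z) ≥ q̂(z)}` be the plug-in likelihood-ratio classification set. Then the true
`λ`-weighted classification risk of the plug-in classifier exceeds the plug-in precision
`α_λ(P̂,Q̂) = ∫ min(λ·p̂, q̂) dν` by at most `λ‖P − P̂‖_TV + ‖Q − Q̂‖_TV`:
`λ·P(Aᶜ) + Q(A) ≤ ∫ min(λ·p̂, q̂) dν + λ‖P − P̂‖_TV + ‖Q − Q̂‖_TV`. -/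
theorem plugin_classifier_excess_risk_bound
    {α : Type*} [MeasurableSpace α] (ν : Measure α) [SigmaFinite ν]
    (P Q Phat Qhat : Measure α)
    [IsProbabilityMeasure P] [IsProbabilityMeasure Q]
    [IsProbabilityMeasure Phat] [IsProbabilityMeasure Qhat]
    (phat qhat : α → ℝ) (hp0 : ∀ x, 0 ≤ phat x) (hq0 : ∀ x, 0 ≤ qhat x)
    (hpmeas : Measurable phat) (hqmeas : Measurable qhat)
    (hpint : Integrable phat ν) (hqint : Integrable qhat ν)
    (hPhat : Phat = ν.withDensity (fun x => ENNReal.ofReal (phat x)))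
    (hQhat : Qhat = ν.withDensity (fun x => ENNReal.ofReal (qhat x)))
    (l : ℝ) (hl : 0 ≤ l) :
    l * (P {z | l * phat z ≥ qhat z}ᶜ).toReal + (Q {z | l * phat z ≥ qhat z}).toReal
      ≤ ∫ z, min (l * phat z) (qhat z) ∂ν
        + l * tvNorm (P.toSignedMeasure - Phat.toSignedMeasure)
        + tvNorm (Q.toSignedMeasure - Qhat.toSignedMeasure) :=
  plugin_classifier_excess_risk_bound_general ν P Q Phat Qhat phat qhat hp0 hq0 hpmeas hqmeas hpint
    hqint hPhat hQhat l hl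
end

section
/- Let P be a probability measure on ℝ^d, let X₁,…,X_N be i.i.d. with law P, let k : ℝ^d → [0,∞) be an integrable kernel, and let f_a be a strictly positive probability density on ℝ^d. Define ĝ(z) = (1/N)·Σ_{i=1}^N k(z − X_i) and g(z) = E[ĝ(z)] = ∫ k(z − x) dP(x). Then ( E[ ∫ |ĝ(z) − g(z)| dz ] )² ≤ (1/N)·∫ Var[k(z − X₁)] / f_a(z) dz. -/
/-!
For fixed `z`, `ĝ(z)` is the sample mean of the i.i.d. variables `k(z - Xᵢ)`, whose variance is
`Var[k(z - X₁)] / N`, so `E|ĝ(z) - g(z)| ≤ √(Var[k(z - X₁)] / N)` by Cauchy–Schwarz in `ω`.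
Integrating in `z` (Tonelli) and writing `√V = √(V / f_a) · √f_a`, Cauchy–Schwarz in `L²(dz)`
together with `∫ f_a = 1` bounds `(∫ √V)²` by `∫ V / f_a`.
-/

open MeasureTheory ProbabilityTheory

lemma ProbabilityTheory.sq_integral_abs_sub_integral_le_variance {Ω : Type*} [MeasurableSpace Ω]
    {μ : Measure Ω} [IsProbabilityMeasure μ] {Y : Ω → ℝ} (hY : MemLp Y 2 μ) :
    (∫ ω, |Y ω - μ[Y]| ∂μ) ^ 2 ≤ variance Y μ := by
  have hS : MemLp (fun ω => |Y ω - μ[Y]|) 2 μ := (hY.sub (memLp_const _)).abs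
  -- `Var |Y - E Y| = E (Y - E Y)² - (E |Y - E Y|)² ≥ 0`
  have h := variance_nonneg (fun ω => |Y ω - μ[Y]|) μ
  rw [variance_eq_sub hS] at h
  rw [variance_eq_integral hY.aemeasurable]
  simpa [sq_abs] using h

section SampleMean

variable {Ω E : Type*} [MeasurableSpace Ω] [MeasurableSpace E] {μ : Measure Ω} {P : Measure E}
  {N : ℕ} {X : Fin N → Ω → E} {φ : E → ℝ}

noncomputable def sampleMean (X : Fin N → Ω → E) (φ : E → ℝ) (ω : Ω) : ℝ :=
  (1 / (N : ℝ)) * ∑ i, φ (X i ω)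

lemma memLp_sampleMean (hX : ∀ i, IdentDistrib (X i) id μ P) (hφ : Measurable φ)
    (hφ2 : MemLp φ 2 P) : MemLp (sampleMean X φ) 2 μ :=
  (memLp_finsetSum _ fun i _ => ((hX i).comp hφ).symm.memLp_snd hφ2).const_mul _

lemma integral_sampleMean (hN : 1 ≤ N) (hX : ∀ i, IdentDistrib (X i) id μ P)
    (hφ : Measurable φ) (hφ1 : Integrable φ P) : μ[sampleMean X φ] = ∫ x, φ x ∂P := by
  have hYint : ∀ i, Integrable (fun ω => φ (X i ω)) μ := fun i =>
    ((hX i).comp hφ).symm.integrable_snd hφ1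
  have hEY : ∀ i, ∫ ω, φ (X i ω) ∂μ = ∫ x, φ x ∂P := fun i => ((hX i).comp hφ).integral_eq
  have hN0 : (N : ℝ) ≠ 0 := Nat.cast_ne_zero.2 (by omega)
  simp only [sampleMean, integral_const_mul, integral_finsetSum _ fun i _ => hYint i, hEY,
    Finset.sum_const, Finset.card_univ, Fintype.card_fin, nsmul_eq_mul]
  field_simp

lemma variance_sampleMean (hX : ∀ i, IdentDistrib (X i) id μ P) (hXi : iIndepFun X μ)
    (hφ : Measurable φ) (hφ2 : MemLp φ 2 P) :
    variance (sampleMean X φ) μ = variance φ P / N := by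
  have hY : ∀ i, MemLp (fun ω => φ (X i ω)) 2 μ := fun i =>
    ((hX i).comp hφ).symm.memLp_snd hφ2
  have hVY : ∀ i, variance (fun ω => φ (X i ω)) μ = variance φ P := fun i =>
    ((hX i).comp hφ).variance_eq
  have hsum : variance (∑ i, fun ω => φ (X i ω)) μ = N * variance φ P := by
    rw [IndepFun.variance_sum (fun i _ => hY i)
      fun i _ j _ hij => (hXi.indepFun hij).comp hφ hφ]
    simp [hVY]
  have hsum_apply : (fun ω => ∑ i, φ (X i ω)) = ∑ i, fun ω => φ (X i ω) := by ext; simp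
  unfold sampleMean
  rw [variance_const_mul, hsum_apply, hsum]
  field_simp

lemma integral_abs_sampleMean_sub_le [IsProbabilityMeasure μ] [IsFiniteMeasure P]
    (hN : 1 ≤ N) (hX : ∀ i, IdentDistrib (X i) id μ P) (hXi : iIndepFun X μ)
    (hφ : Measurable φ) (hφ2 : MemLp φ 2 P) :
    ∫ ω, |sampleMean X φ ω - ∫ x, φ x ∂P| ∂μ ≤ √(variance φ P) / √N := by
  rw [← Real.sqrt_div' _ N.cast_nonneg]
  refine (le_abs_self _).trans (Real.abs_le_sqrt ?_)
  rw [← integral_sampleMean hN hX hφ (hφ2.integrable one_le_two),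
    ← variance_sampleMean hX hXi hφ hφ2]
  exact sq_integral_abs_sub_integral_le_variance (memLp_sampleMean hX hφ hφ2)

lemma measurable_abs_sampleMean_sub [AddGroup E] [MeasurableSub₂ E] [SFinite P] {k : E → ℝ}
    (hk : Measurable k) (hX : ∀ i, Measurable (X i)) :
    Measurable fun p : Ω × E =>
      |sampleMean X (fun x => k (p.2 - x)) p.1 - ∫ x, k (p.2 - x) ∂P| := by
  have hsum : Measurable fun p : Ω × E => ∑ i, k (p.2 - X i p.1) := by fun_prop
  have hconv : Measurable fun z => ∫ x, k (z - x) ∂P :=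
    (hk.comp (measurable_fst.sub measurable_snd)).stronglyMeasurable.integral_prod_right'.measurable
  exact ((hsum.const_mul _).sub (hconv.comp measurable_snd)).abs

end SampleMean

lemma integral_integral_le_integral_of_forall_integral_le {α β : Type*} [MeasurableSpace α]
    [MeasurableSpace β] {μ : Measure α} {ν : Measure β} [SFinite μ] [SFinite ν]
    {F : α → β → ℝ} {G : β → ℝ} (hF0 : ∀ a b, 0 ≤ F a b)
    (hF : AEStronglyMeasurable (Function.uncurry F) (μ.prod ν))
    (hFint : ∀ b, Integrable (F · b) μ) (hG : Integrable G ν)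
    (hle : ∀ b, ∫ a, F a b ∂μ ≤ G b) :
    ∫ a, ∫ b, F a b ∂ν ∂μ ≤ ∫ b, G b ∂ν := by
  have hint : Integrable (Function.uncurry F) (μ.prod ν) := by
    refine (integrable_prod_iff' hF).2
      ⟨ae_of_all _ hFint, hG.mono' hF.norm.prod_swap.integral_prod_right' (ae_of_all _ fun b => ?_)⟩
    simp only [Function.uncurry_apply_pair, Real.norm_eq_abs, abs_of_nonneg (hF0 _ _)]
    rw [abs_of_nonneg (integral_nonneg fun a => hF0 a b)]
    exact hle b
  rw [integral_integral_swap hint]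
  exact integral_mono_of_nonneg (ae_of_all _ fun b => integral_nonneg fun a => hF0 a b) hG
    (ae_of_all _ hle)

lemma Real.sqrt_eq_sqrt_div_mul_sqrt {a b : ℝ} (ha : 0 ≤ a) (hb : 0 < b) :
    √a = √(a / b) * √b := by
  rw [← Real.sqrt_mul (div_nonneg ha hb.le), div_mul_cancel₀ _ hb.ne']

section ImportanceSampling

variable {α : Type*} [MeasurableSpace α] {ν : Measure α} {v w : α → ℝ}

lemma memLp_two_sqrt_of_integrable (hv : ∀ x, 0 ≤ v x) (hvi : Integrable v ν) :
    MemLp (fun x => √(v x)) 2 ν := by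
  have hmeas := Real.continuous_sqrt.comp_aestronglyMeasurable hvi.aestronglyMeasurable
  refine (memLp_two_iff_integrable_sq hmeas).2 ?_
  simpa only [Real.sq_sqrt (hv _)] using hvi

lemma integrable_sqrt_of_integrable_div (hv : ∀ x, 0 ≤ v x) (hw : ∀ x, 0 < w x)
    (hwi : Integrable w ν) (hvw : Integrable (fun x => v x / w x) ν) :
    Integrable (fun x => √(v x)) ν := by
  have hfactor : (fun x => √(v x)) = fun x => √(v x / w x) * √(w x) :=
    funext fun x => Real.sqrt_eq_sqrt_div_mul_sqrt (hv x) (hw x)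
  rw [hfactor]
  exact (memLp_two_sqrt_of_integrable (fun x => div_nonneg (hv x) (hw x).le) hvw).integrable_mul
    (memLp_two_sqrt_of_integrable (fun x => (hw x).le) hwi)

lemma sq_integral_sqrt_le_integral_div_mul_integral (hv : ∀ x, 0 ≤ v x) (hw : ∀ x, 0 < w x)
    (hwi : Integrable w ν) (hvw : Integrable (fun x => v x / w x) ν) :
    (∫ x, √(v x) ∂ν) ^ 2 ≤ (∫ x, v x / w x ∂ν) * ∫ x, w x ∂ν := by
  have hvw0 : ∀ x, 0 ≤ v x / w x := fun x => div_nonneg (hv x) (hw x).le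
  have h2 : ENNReal.ofReal 2 = 2 := ENNReal.ofReal_ofNat 2
  have hCS := integral_mul_le_Lp_mul_Lq_of_nonneg Real.HolderConjugate.two_two
    (ae_of_all _ fun x => Real.sqrt_nonneg (v x / w x))
    (ae_of_all _ fun x => Real.sqrt_nonneg (w x))
    (h2 ▸ memLp_two_sqrt_of_integrable hvw0 hvw)
    (h2 ▸ memLp_two_sqrt_of_integrable (fun x => (hw x).le) hwi)
  simp only [Real.rpow_two, Real.sq_sqrt (hvw0 _), Real.sq_sqrt (hw _).le,
    ← Real.sqrt_eq_rpow, ← Real.sqrt_eq_sqrt_div_mul_sqrt (hv _) (hw _)] at hCS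
  rw [← Real.sqrt_mul (integral_nonneg hvw0)] at hCS
  exact (Real.le_sqrt (integral_nonneg fun x => Real.sqrt_nonneg _)
    (mul_nonneg (integral_nonneg hvw0) (integral_nonneg fun x => (hw x).le))).1 hCS

end ImportanceSampling

theorem kde_L1_deviation_importance_sampling_bound_general
    {d : ℕ} (P : Measure (EuclideanSpace ℝ (Fin d))) [IsProbabilityMeasure P]
    (N : ℕ) (hN : 1 ≤ N)
    {Ω : Type*} [MeasurableSpace Ω] (μ : Measure Ω) [IsProbabilityMeasure μ]
    (X : Fin N → Ω → EuclideanSpace ℝ (Fin d))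
    (hmeas : ∀ i, Measurable (X i))
    (hindep : iIndepFun X μ)
    (hlaw : ∀ i, Measure.map (X i) μ = P)
    (k : EuclideanSpace ℝ (Fin d) → ℝ)
    (hkmeas : Measurable k)
    (hksq : ∀ z, Integrable (fun x => (k (z - x)) ^ 2) P)
    (fa : EuclideanSpace ℝ (Fin d) → ℝ)
    (hfa0 : ∀ z, 0 < fa z) (hfaint : ∫ z, fa z = 1)
    (hvarint : Integrable
      (fun z => (∫ x, (k (z - x) - ∫ x', k (z - x') ∂P) ^ 2 ∂P) / fa z) volume) :
    (∫ ω, (∫ z, |(1 / (N : ℝ)) * (∑ i : Fin N, k (z - X i ω))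
            - ∫ x, k (z - x) ∂P| ∂volume) ∂μ) ^ 2
      ≤ (1 / (N : ℝ)) *
          ∫ z, (∫ x, (k (z - x) - ∫ x', k (z - x') ∂P) ^ 2 ∂P) / fa z := by
  have hkz : ∀ z, Measurable fun x => k (z - x) := fun z => by fun_prop
  have hkz2 : ∀ z, MemLp (fun x => k (z - x)) 2 P := fun z =>
    (memLp_two_iff_integrable_sq (hkz z).aestronglyMeasurable).2 (hksq z)
  have hvar : ∀ z, ∫ x, (k (z - x) - ∫ x', k (z - x') ∂P) ^ 2 ∂P
      = variance (fun x => k (z - x)) P := fun z =>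
    (variance_eq_integral (hkz z).aemeasurable).symm
  simp only [hvar] at hvarint ⊢
  have hX : ∀ i, IdentDistrib (X i) id μ P := fun i =>
    ⟨(hmeas i).aemeasurable, aemeasurable_id, by rw [hlaw i, Measure.map_id]⟩
  have hfa : Integrable fa := .of_integral_ne_zero (by rw [hfaint]; exact one_ne_zero)
  have hsqrtV :=
    integrable_sqrt_of_integrable_div (fun z => variance_nonneg _ _) hfa0 hfa hvarint
  have hL := integral_integral_le_integral_of_forall_integral_le
    (F := fun ω z => |sampleMean X (fun x => k (z - x)) ω - ∫ x, k (z - x) ∂P|)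
    (fun _ _ => abs_nonneg _) (measurable_abs_sampleMean_sub hkmeas hmeas).aestronglyMeasurable
    (fun z => (((memLp_sampleMean hX (hkz z) (hkz2 z)).integrable one_le_two).sub
      (integrable_const _)).abs) (hsqrtV.div_const _)
    fun z => integral_abs_sampleMean_sub_le hN hX hindep (hkz z) (hkz2 z)
  rw [integral_div] at hL
  calc _ ≤ ((∫ z, √(variance (fun x => k (z - x)) P)) / √N) ^ 2 :=
        pow_le_pow_left₀ (integral_nonneg fun _ => integral_nonneg fun _ => abs_nonneg _) hL 2
    _ = (∫ z, √(variance (fun x => k (z - x)) P)) ^ 2 / N := by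
        rw [div_pow, Real.sq_sqrt N.cast_nonneg]
    _ ≤ (∫ z, variance (fun x => k (z - x)) P / fa z) * (∫ z, fa z) / N := by
        gcongr
        exact sq_integral_sqrt_le_integral_div_mul_integral (fun z => variance_nonneg _ _) hfa0
          hfa hvarint
    _ = _ := by rw [hfaint]; ring

/-- (Importance sampling + Cauchy–Schwarz bound on the `L¹` deviation of
a kernel density estimator.) Let `X₁,…,X_N` be i.i.d. with law `P` on `ℝ^d`, let
`k : ℝ^d → [0,∞)` be an integrable kernel, and let `f_a` be a strictly positive probability
density on `ℝ^d`. With `ĝ(z) = (1/N)·Σᵢ k(z − Xᵢ)` and `g(z) = E[ĝ(z)] = ∫ k(z−x) dP(x)`,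
`( E[ ∫ |ĝ(z) − g(z)| dz ] )² ≤ (1/N)·∫ Var[k(z − X₁)] / f_a(z) dz`,
where `Var[k(z − X₁)] = ∫ (k(z−x) − ∫ k(z−x') dP(x'))² dP(x)`. -/
theorem kde_L1_deviation_importance_sampling_bound
    {d : ℕ} (P : Measure (EuclideanSpace ℝ (Fin d))) [IsProbabilityMeasure P]
    (N : ℕ) (hN : 1 ≤ N)
    {Ω : Type*} [MeasurableSpace Ω] (μ : Measure Ω) [IsProbabilityMeasure μ]
    (X : Fin N → Ω → EuclideanSpace ℝ (Fin d))
    (hmeas : ∀ i, Measurable (X i))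
    (hindep : iIndepFun X μ)
    (hlaw : ∀ i, Measure.map (X i) μ = P)
    (k : EuclideanSpace ℝ (Fin d) → ℝ)
    (hk0 : ∀ z, 0 ≤ k z) (hkmeas : Measurable k) (hkint : Integrable k volume)
    (hksq : ∀ z, Integrable (fun x => (k (z - x)) ^ 2) P)
    (fa : EuclideanSpace ℝ (Fin d) → ℝ)
    (hfa0 : ∀ z, 0 < fa z) (hfameas : Measurable fa) (hfaint : ∫ z, fa z = 1)
    (hvarint : Integrable
      (fun z => (∫ x, (k (z - x) - ∫ x', k (z - x') ∂P) ^ 2 ∂P) / fa z) volume) :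
    (∫ ω, (∫ z, |(1 / (N : ℝ)) * (∑ i : Fin N, k (z - X i ω))
            - ∫ x, k (z - x) ∂P| ∂volume) ∂μ) ^ 2
      ≤ (1 / (N : ℝ)) *
          ∫ z, (∫ x, (k (z - x) - ∫ x', k (z - x') ∂P) ^ 2 ∂P) / fa z :=
  kde_L1_deviation_importance_sampling_bound_general P N hN μ X hmeas hindep hlaw k hkmeas hksq fa
    hfa0 hfaint hvarint
end

section
/- Let (Ω, dist) be a metric space, let X and Y be finite nonempty subsets of Ω, let y ∈ Ω, and let k be an integer with 1 ≤ k ≤ |Y|. For a finite nonempty set S ⊆ Ω with k ≤ |S|, let r_S(y) denote the k-th smallest value of the multiset of distances {dist(y, s) : s ∈ S}, so that the kNN ball of y within S is {z : dist(y, z) ≤ r_S(y)}. Then there exists x ∈ X with dist(y, x) ≤ r_Y(y) if and only if there exists x ∈ X with dist(y, x) ≤ r_{X∪Y}(y). -/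
/-- The `k`-nearest-neighbor radius of a query point `y` within a finite set `S` of points
of a metric space: the `k`-th smallest value (counted with multiplicity) of the distances
from `y` to the points of `S`. The kNN ball of `y` within `S` is the closed ball of center
`y` and this radius. -/
noncomputable def knnRadius {α : Type*} [MetricSpace α] (k : ℕ) (y : α) (S : Finset α) : ℝ :=
  ((S.val.map (fun s => dist y s)).sort (· ≤ ·)).getD (k - 1) 0

/-!
The radius `r_S(y)` is an order statistic, so `r_S(y) ≤ t` holds exactly when at least `k`
points of `S` lie within distance `t` of `y`. Enlarging `S` can only shrink the radius, which
gives the backward implication. Conversely, if no point of `X` lies in the pooled kNN ball,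
then the points of `X ∪ Y` and of `Y` in that ball coincide, so the ball already contains `k`
points of `Y`, and `r_Y(y)` is no larger than the pooled radius.
-/

theorem List.Pairwise.getElem_le_iff_lt_countP {α : Type*} [LinearOrder α] {l : List α}
    (hl : l.Pairwise (· ≤ ·)) {i : ℕ} (hi : i < l.length) (t : α) :
    l[i] ≤ t ↔ i < l.countP (· ≤ t) := by
  induction l generalizing i with
  | nil => simp at hi
  | cons a l ih =>
    obtain ⟨ha_le, hl⟩ := List.pairwise_cons.mp hl
    by_cases hat : a ≤ t
    · rw [List.countP_cons_of_pos (by simpa using hat)]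
      cases i with
      | zero => simpa using hat
      | succ i => simpa using ih hl (Nat.lt_of_succ_lt_succ hi)
    · have hhead_le : ∀ b ∈ a :: l, a ≤ b := fun b hb =>
        (List.mem_cons.mp hb).elim (fun hba => hba ▸ le_rfl) (ha_le b)
      have hcount : (a :: l).countP (· ≤ t) = 0 := List.countP_eq_zero.mpr fun b hb => by
        simpa using fun hbt => hat ((hhead_le b hb).trans hbt)
      simpa [hcount] using fun h => hat ((hhead_le _ (List.getElem_mem hi)).trans h)

theorem Multiset.sort_getD_le_iff_lt_countP {α : Type*} [LinearOrder α] (m : Multiset α)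
    {i : ℕ} (hi : i < Multiset.card m) (d t : α) :
    (m.sort (· ≤ ·)).getD i d ≤ t ↔ i < m.countP (· ≤ t) := by
  have hi' : i < (m.sort (· ≤ ·)).length := by rwa [Multiset.length_sort]
  conv_rhs => rw [← Multiset.sort_eq m (· ≤ ·), Multiset.coe_countP]
  rw [List.getD_eq_getElem _ _ hi']
  exact (Multiset.pairwise_sort m _).getElem_le_iff_lt_countP hi' t

section knnRadius

variable {α : Type*} [MetricSpace α] {k : ℕ} {y : α}

theorem knnRadius_le_iff {S : Finset α} (hk1 : 1 ≤ k) (hk : k ≤ S.card) (t : ℝ) :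
    knnRadius k y S ≤ t ↔ k ≤ (S.filter (fun s => dist y s ≤ t)).card := by
  have hk' : k - 1 < Multiset.card (S.val.map (fun s => dist y s)) := by
    rw [Multiset.card_map, Finset.card_val]; omega
  rw [knnRadius, Multiset.sort_getD_le_iff_lt_countP _ hk', Multiset.countP_map,
    ← Finset.filter_val, Finset.card_val]
  omega

theorem knnRadius_le_of_subset {S T : Finset α} (hST : S ⊆ T) (hk1 : 1 ≤ k) (hk : k ≤ S.card) :
    knnRadius k y T ≤ knnRadius k y S := by
  rw [knnRadius_le_iff hk1 (hk.trans (Finset.card_le_card hST))]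
  exact ((knnRadius_le_iff hk1 hk _).mp le_rfl).trans
    (Finset.card_le_card (Finset.filter_subset_filter _ hST))

end knnRadius

theorem knn_ball_cover_iff_pooled_general
    {α : Type*} [MetricSpace α] [DecidableEq α]
    (X Y : Finset α)
    (y : α) (k : ℕ) (hk1 : 1 ≤ k) (hk : k ≤ Y.card) :
    (∃ x ∈ X, dist y x ≤ knnRadius k y Y) ↔ (∃ x ∈ X, dist y x ≤ knnRadius k y (X ∪ Y)) := by
  set rU := knnRadius k y (X ∪ Y)
  constructor
  · contrapose!
    intro hX_far
    have hball : (X ∪ Y).filter (fun s => dist y s ≤ rU) = Y.filter (fun s => dist y s ≤ rU) := by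
      rw [Finset.filter_union, Finset.filter_false_of_mem fun x hx => not_le.mpr (hX_far x hx),
        Finset.empty_union]
    have hrY_le : knnRadius k y Y ≤ rU := by
      rw [knnRadius_le_iff hk1 hk, ← hball]
      exact (knnRadius_le_iff hk1 (hk.trans (Finset.card_le_card Finset.subset_union_right)) _).mp
        le_rfl
    exact fun x hx => hrY_le.trans_lt (hX_far x hx)
  · rintro ⟨x, hx, hxY⟩
    exact ⟨x, hx, hxY.trans (knnRadius_le_of_subset Finset.subset_union_right hk1 hk)⟩

/-- Let `X` and `Y` be finite nonempty subsets of a metric space, `y` a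
point, and `1 ≤ k ≤ |Y|`. Then some point of `X` lies in the kNN ball of `y` within `Y`
if and only if some point of `X` lies in the kNN ball of `y` within `X ∪ Y`:
`(∃ x ∈ X, dist y x ≤ r_Y(y)) ↔ (∃ x ∈ X, dist y x ≤ r_{X∪Y}(y))`. -/
theorem knn_ball_cover_iff_pooled
    {α : Type*} [MetricSpace α] [DecidableEq α]
    (X Y : Finset α) (hX : X.Nonempty) (hY : Y.Nonempty)
    (y : α) (k : ℕ) (hk1 : 1 ≤ k) (hk : k ≤ Y.card) :
    (∃ x ∈ X, dist y x ≤ knnRadius k y Y) ↔ (∃ x ∈ X, dist y x ≤ knnRadius k y (X ∪ Y)) :=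
  knn_ball_cover_iff_pooled_general X Y y k hk1 hk
end
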